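/- arXiv:2310.12721 — 2 statements merged into one kernel-verified Lean document; each statement's English description precedes it below -/
import Mathlib

section
/- Let H be a Hopf algebra over a field F, let A be a left H-module algebra and B a right H-module algebra, and equip A⊗B with the left H-module structure c·(a⊗b) = (c₍₁₎·a) ⊗ (b·S(c₍₂₎)). Then the space of invariants (A⊗B)^H is a subalgebra of the algebra A⊗B (with componentwise multiplication (a⊗b)(a'⊗b') = aa'⊗bb'). -/
open TensorProduct

/-- The bilinear map `(x, y) ↦ (x·f)(y·g)`, used to express the Sweedler-notation
module-algebra axiom `c·(fg) = (c₍₁₎·f)(c₍₂₎·g)` as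
`act c (f*g) = lift (mulSweedler act f g) (comul c)`. -/
noncomputable def mulSweedler (F : Type*) {H A : Type*} [CommSemiring F] [AddCommMonoid H]
    [Module F H] [Semiring A] [Algebra F A] (act : H →ₗ[F] A →ₗ[F] A) (f g : A) :
    H →ₗ[F] H →ₗ[F] A :=
  LinearMap.mk₂ F (fun x y => act x f * act y g)
    (fun x x' y => by simp [add_mul]) (fun c x y => by simp [smul_mul_assoc])
    (fun x y y' => by simp [mul_add]) (fun c x y => by simp [mul_smul_comm])

/-- The left `H`-module structure on `A ⊗ B` given by
`c · (a ⊗ b) = (c₍₁₎ · a) ⊗ (b · S(c₍₂₎))`, where `actA` is a left action on `A` and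
`actB` is a right action on `B` (written on the left: `actB c b = b · c`). -/
noncomputable def tensAct (F : Type*) {H A B : Type*} [CommSemiring F] [Semiring H]
    [HopfAlgebra F H] [Semiring A] [Algebra F A] [Semiring B] [Algebra F B]
    (actA : H →ₗ[F] A →ₗ[F] A) (actB : H →ₗ[F] B →ₗ[F] B) :
    H →ₗ[F] (A ⊗[F] B) →ₗ[F] (A ⊗[F] B) :=
  (TensorProduct.lift (((TensorProduct.mapBilinear (RingHom.id F) A B A B) ∘ₗ actA).compl₂
      (actB ∘ₗ (HopfAlgebra.antipode (R := F))))) ∘ₗ (Coalgebra.comul (R := F))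


open TensorProduct Coalgebra HopfAlgebra

section HopfAux

variable {F H : Type*} [CommSemiring F] [Semiring H] [HopfAlgebra F H]

lemma repr_sum_counit_left {h : H} {ι : Type*} (r : Coalgebra.Repr F h ι) :
    ∑ i ∈ r.index, Coalgebra.counit (R := F) (r.left i) • r.right i = h := by
  have h1 := congrArg (TensorProduct.lid F H) (sum_counit_tmul_eq (R := F) r)
  simp only [map_sum, lid_tmul, one_smul] at h1
  exact h1

lemma repr_sum_counit_right {h : H} {ι : Type*} (r : Coalgebra.Repr F h ι) :
    ∑ i ∈ r.index, Coalgebra.counit (R := F) (r.right i) • r.left i = h := by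
  have h1 := congrArg (TensorProduct.rid F H) (sum_tmul_counit_eq (R := F) r)
  simp only [map_sum, rid_tmul, one_smul] at h1
  exact h1

lemma repr_sum_counit_counit {h : H} {ι : Type*} (r : Coalgebra.Repr F h ι) :
    ∑ i ∈ r.index, Coalgebra.counit (R := F) (r.left i) * Coalgebra.counit (R := F) (r.right i)
      = Coalgebra.counit (R := F) h := by
  have h1 := congrArg (Coalgebra.counit (R := F)) (repr_sum_counit_left r)
  simpa [map_sum, smul_eq_mul] using h1

lemma counit_antipode' (h : H) :
    Coalgebra.counit (R := F) (antipode (R := F) h) = Coalgebra.counit (R := F) h := by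
  set r := Coalgebra.Repr.arbitrary F h with hr
  have h1 := congrArg (Coalgebra.counit (R := F)) (sum_antipode_mul_eq_algebraMap_counit (R := F) r)
  simp only [map_sum, Bialgebra.counit_mul, Bialgebra.counit_algebraMap] at h1
  calc Coalgebra.counit (R := F) (antipode (R := F) h)
      = Coalgebra.counit (R := F) (antipode (R := F)
          (∑ i ∈ r.index, Coalgebra.counit (R := F) (r.right i) • r.left i)) := by
        rw [repr_sum_counit_right]
    _ = ∑ i ∈ r.index, Coalgebra.counit (R := F) (antipode (R := F) (r.left i)) *
          Coalgebra.counit (R := F) (r.right i) := by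
        rw [map_sum, map_sum]
        exact Finset.sum_congr rfl fun i _ => by simp [smul_eq_mul, mul_comm]
    _ = Coalgebra.counit (R := F) h := h1

end HopfAux


open TensorProduct Coalgebra HopfAlgebra

section Conv

variable {F H : Type*} [CommSemiring F] [Semiring H] [HopfAlgebra F H]
variable {M : Type*} [Semiring M] [Algebra F M]

/-- Convolution product of linear maps `H →ₗ M`. -/
noncomputable def conv (f g : H →ₗ[F] M) : H →ₗ[F] M :=
  LinearMap.mul' F M ∘ₗ TensorProduct.map f g ∘ₗ Coalgebra.comul (R := F)

lemma conv_apply_repr (f g : H →ₗ[F] M) {h : H} {ι : Type*} (r : Coalgebra.Repr F h ι) :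
    conv f g h = ∑ i ∈ r.index, f (r.left i) * g (r.right i) := by
  simp only [conv, LinearMap.comp_apply, ← r.eq, map_sum, TensorProduct.map_tmul,
    LinearMap.mul'_apply]

/-- The convolution unit `h ↦ ε(h)1`. -/
noncomputable def convOne : H →ₗ[F] M :=
  Algebra.linearMap F M ∘ₗ Coalgebra.counit (R := F)

lemma conv_one_right (f : H →ₗ[F] M) : conv f (convOne) = f := by
  ext h
  set r := Coalgebra.Repr.arbitrary F h with hr
  rw [conv_apply_repr f convOne r]
  calc ∑ i ∈ r.index, f (r.left i) * convOne (r.right i)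
      = ∑ i ∈ r.index, Coalgebra.counit (R := F) (r.right i) • f (r.left i) := by
        refine Finset.sum_congr rfl fun i _ => ?_
        simp only [convOne, LinearMap.comp_apply, Algebra.linearMap_apply]
        rw [← Algebra.commutes, ← Algebra.smul_def]
    _ = f h := by
        conv_rhs => rw [← repr_sum_counit_right r]
        simp only [map_sum, map_smul]

lemma conv_one_left (f : H →ₗ[F] M) : conv (convOne) f = f := by
  ext h
  set r := Coalgebra.Repr.arbitrary F h with hr
  rw [conv_apply_repr convOne f r]
  calc ∑ i ∈ r.index, convOne (r.left i) * f (r.right i)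
      = ∑ i ∈ r.index, Coalgebra.counit (R := F) (r.left i) • f (r.right i) := by
        refine Finset.sum_congr rfl fun i _ => ?_
        simp only [convOne, LinearMap.comp_apply, Algebra.linearMap_apply]
        rw [← Algebra.smul_def]
    _ = f h := by
        conv_rhs => rw [← repr_sum_counit_left r]
        simp only [map_sum, map_smul]

lemma conv_assoc (f g k : H →ₗ[F] M) : conv (conv f g) k = conv f (conv g k) := by
  ext h
  set r := Coalgebra.Repr.arbitrary F h with hr
  set p := fun i => Coalgebra.Repr.arbitrary F (r.left i) with hp
  set q := fun i => Coalgebra.Repr.arbitrary F (r.right i) with hq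
  have key := sum_map_tmul_tmul_eq (R := F) f g k h (repr := r) (a₁ := p) (a₂ := q)
  have key2 := congrArg (LinearMap.mul' F M ∘ₗ (LinearMap.mul' F M).lTensor M) key
  simp only [map_sum, LinearMap.comp_apply, LinearMap.lTensor_tmul, LinearMap.mul'_apply] at key2
  rw [conv_apply_repr _ k r, conv_apply_repr f _ r]
  calc ∑ i ∈ r.index, conv f g (r.left i) * k (r.right i)
      = ∑ i ∈ r.index, ∑ j ∈ (p i).index,
          f ((p i).left j) * (g ((p i).right j) * k (r.right i)) := by
        refine Finset.sum_congr rfl fun i _ => ?_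
        rw [conv_apply_repr f g (p i), Finset.sum_mul]
        exact Finset.sum_congr rfl fun j _ => by rw [mul_assoc]
    _ = ∑ i ∈ r.index, ∑ j ∈ (q i).index,
          f (r.left i) * (g ((q i).left j) * k ((q i).right j)) := key2.symm
    _ = ∑ i ∈ r.index, f (r.left i) * conv g k (r.right i) := by
        refine Finset.sum_congr rfl fun i _ => ?_
        rw [conv_apply_repr g k (q i), Finset.mul_sum]

end Conv


section Quad

open TensorProduct Coalgebra HopfAlgebra

variable {F H : Type*} [CommSemiring F] [Semiring H] [HopfAlgebra F H]

/-- Fourfold coassociativity: `(Δ ⊗ Δ)Δ = (1 ⊗ Δ ⊗ 1)(1 ⊗ Δ)Δ` in Sweedler sum form. -/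
lemma quad {h : H} {ι : Type*} {κ Λ : ι → Type*} {Θ : ∀ i, Λ i → Type*}
    (r : Coalgebra.Repr F h ι)
    (p : ∀ i : r.ι, Coalgebra.Repr F (r.left i) (κ i))
    (q : ∀ i : r.ι, Coalgebra.Repr F (r.right i) (Λ i))
    (t : ∀ (i : r.ι) (j : (q i).ι), Coalgebra.Repr F ((q i).left j) (Θ i j)) :
    ∑ i ∈ r.index, ∑ k ∈ (p i).index, ∑ l ∈ (q i).index,
      (p i).left k ⊗ₜ[F] ((p i).right k ⊗ₜ[F] ((q i).left l ⊗ₜ[F] (q i).right l))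
    = ∑ i ∈ r.index, ∑ j ∈ (q i).index, ∑ m ∈ (t i j).index,
      r.left i ⊗ₜ[F] ((t i j).left m ⊗ₜ[F] ((t i j).right m ⊗ₜ[F] (q i).right j)) := by
  have E1 := Coalgebra.sum_tmul_tmul_eq r p q
  set g₁ : H ⊗[F] H →ₗ[F] H ⊗[F] (H ⊗[F] H) :=
    (Coalgebra.comul (R := F)).lTensor H with hg₁
  set g₂ : H ⊗[F] H →ₗ[F] H ⊗[F] (H ⊗[F] H) :=
    (TensorProduct.assoc F H H H).toLinearMap ∘ₗ (Coalgebra.comul (R := F)).rTensor H with hg₂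
  have hgg : ∀ x : H, g₁ (Coalgebra.comul (R := F) x) = g₂ (Coalgebra.comul (R := F) x) := by
    intro x
    simp only [hg₁, hg₂, LinearMap.comp_apply]
    exact (Coalgebra.coassoc_apply x).symm
  have claimA : (∑ i ∈ r.index, ∑ k ∈ (p i).index, ∑ l ∈ (q i).index,
      (p i).left k ⊗ₜ[F] ((p i).right k ⊗ₜ[F] ((q i).left l ⊗ₜ[F] (q i).right l)))
      = g₁.lTensor H (∑ i ∈ r.index, ∑ k ∈ (p i).index,
          (p i).left k ⊗ₜ[F] ((p i).right k ⊗ₜ[F] r.right i)) := by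
    rw [map_sum]
    refine Finset.sum_congr rfl fun i _ => ?_
    rw [map_sum]
    refine Finset.sum_congr rfl fun k _ => ?_
    rw [LinearMap.lTensor_tmul, hg₁, LinearMap.lTensor_tmul, ← (q i).eq, tmul_sum, tmul_sum]
  have claimB : (∑ i ∈ r.index, ∑ j ∈ (q i).index, ∑ m ∈ (t i j).index,
      r.left i ⊗ₜ[F] ((t i j).left m ⊗ₜ[F] ((t i j).right m ⊗ₜ[F] (q i).right j)))
      = g₂.lTensor H (∑ i ∈ r.index, ∑ j ∈ (q i).index,
          r.left i ⊗ₜ[F] ((q i).left j ⊗ₜ[F] (q i).right j)) := by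
    rw [map_sum]
    refine Finset.sum_congr rfl fun i _ => ?_
    rw [map_sum]
    refine Finset.sum_congr rfl fun j _ => ?_
    rw [LinearMap.lTensor_tmul, hg₂, LinearMap.comp_apply, LinearMap.rTensor_tmul,
      ← (t i j).eq, sum_tmul, map_sum, tmul_sum]
    refine Finset.sum_congr rfl fun m _ => ?_
    simp
  have claimC : g₁.lTensor H (∑ i ∈ r.index, ∑ j ∈ (q i).index,
          r.left i ⊗ₜ[F] ((q i).left j ⊗ₜ[F] (q i).right j))
      = g₂.lTensor H (∑ i ∈ r.index, ∑ j ∈ (q i).index,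
          r.left i ⊗ₜ[F] ((q i).left j ⊗ₜ[F] (q i).right j)) := by
    have : (∑ i ∈ r.index, ∑ j ∈ (q i).index,
        r.left i ⊗ₜ[F] ((q i).left j ⊗ₜ[F] (q i).right j))
        = ∑ i ∈ r.index, r.left i ⊗ₜ[F] (Coalgebra.comul (R := F) (r.right i)) := by
      refine Finset.sum_congr rfl fun i _ => ?_
      rw [← (q i).eq, tmul_sum]
    rw [this, map_sum, map_sum]
    refine Finset.sum_congr rfl fun i _ => ?_
    rw [LinearMap.lTensor_tmul, LinearMap.lTensor_tmul, hgg]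
  rw [claimA, E1, claimC, ← claimB]

end Quad


section ComulAntipode

open TensorProduct Coalgebra HopfAlgebra

variable {F H : Type*} [CommSemiring F] [Semiring H] [HopfAlgebra F H]

/-- The antipode is anti-comultiplicative: `Δ ∘ S = (S ⊗ S) ∘ τ ∘ Δ`. -/
lemma comul_antipode_eq :
    (Coalgebra.comul (R := F)) ∘ₗ (antipode (R := F) : H →ₗ[F] H) =
      (TensorProduct.map (antipode (R := F)) (antipode (R := F))) ∘ₗ
        (TensorProduct.comm F H H).toLinearMap ∘ₗ (Coalgebra.comul (R := F)) := by
  set f : H →ₗ[F] H ⊗[F] H := (Coalgebra.comul (R := F)) ∘ₗ (antipode (R := F)) with hf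
  set d : H →ₗ[F] H ⊗[F] H := Coalgebra.comul (R := F) with hd
  set g : H →ₗ[F] H ⊗[F] H := (TensorProduct.map (antipode (R := F)) (antipode (R := F))) ∘ₗ
        (TensorProduct.comm F H H).toLinearMap ∘ₗ (Coalgebra.comul (R := F)) with hg
  have h1 : conv f d = convOne := by
    ext h
    set r := Coalgebra.Repr.arbitrary F h with hr
    rw [conv_apply_repr f d r]
    calc ∑ i ∈ r.index, f (r.left i) * d (r.right i)
        = ∑ i ∈ r.index, Coalgebra.comul (R := F)
            (antipode (R := F) (r.left i) * r.right i) := by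
          refine Finset.sum_congr rfl fun i _ => ?_
          rw [hf, hd, LinearMap.comp_apply, Bialgebra.comul_mul]
      _ = Coalgebra.comul (R := F) (algebraMap F H (Coalgebra.counit (R := F) h)) := by
          rw [← map_sum, sum_antipode_mul_eq_algebraMap_counit (R := F) r]
      _ = convOne h := by
          rw [Bialgebra.comul_algebraMap]
          rfl
  have h2 : conv d g = convOne := by
    ext h
    set r := Coalgebra.Repr.arbitrary F h with hr
    set p := fun i => Coalgebra.Repr.arbitrary F (r.left i) with hp
    set q := fun i => Coalgebra.Repr.arbitrary F (r.right i) with hq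
    set t := fun i (j : (q i).ι) => Coalgebra.Repr.arbitrary F ((q i).left j) with ht
    set Φ : H ⊗[F] (H ⊗[F] (H ⊗[F] H)) →ₗ[F] H ⊗[F] H :=
      TensorProduct.map (LinearMap.mul' F H) (LinearMap.mul' F H) ∘ₗ
        (tensorTensorTensorComm F H H H H).toLinearMap ∘ₗ
        (LinearMap.lTensor (H ⊗[F] H)
          ((TensorProduct.map (antipode (R := F)) (antipode (R := F))) ∘ₗ
            (TensorProduct.comm F H H).toLinearMap)) ∘ₗ
        (TensorProduct.assoc F H H (H ⊗[F] H)).symm.toLinearMap with hΦ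
    have hΦt : ∀ w x y z : H, Φ (w ⊗ₜ[F] (x ⊗ₜ[F] (y ⊗ₜ[F] z)))
        = (w * antipode (R := F) z) ⊗ₜ[F] (x * antipode (R := F) y) := by
      intro w x y z
      simp [hΦ, tensorTensorTensorComm_tmul]
    have hq2 := congrArg (⇑Φ) (quad r p q t)
    simp only [map_sum, hΦt] at hq2
    rw [conv_apply_repr d g r]
    calc ∑ i ∈ r.index, d (r.left i) * g (r.right i)
        = ∑ i ∈ r.index, ∑ k ∈ (p i).index, ∑ l ∈ (q i).index,
            ((p i).left k * antipode (R := F) ((q i).right l)) ⊗ₜ[F]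
              ((p i).right k * antipode (R := F) ((q i).left l)) := by
          refine Finset.sum_congr rfl fun i _ => ?_
          rw [hd, hg]
          simp only [LinearMap.comp_apply]
          rw [← (p i).eq, ← (q i).eq, map_sum, map_sum]
          simp only [LinearEquiv.coe_coe, TensorProduct.comm_tmul, TensorProduct.map_tmul]
          rw [Finset.sum_mul_sum]
          simp only [Algebra.TensorProduct.tmul_mul_tmul]
      _ = ∑ i ∈ r.index, ∑ j ∈ (q i).index, ∑ m ∈ (t i j).index,
            (r.left i * antipode (R := F) ((q i).right j)) ⊗ₜ[F]
              ((t i j).left m * antipode (R := F) ((t i j).right m)) := hq2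
      _ = convOne h := by
          have step : ∀ i ∈ r.index, (∑ j ∈ (q i).index, ∑ m ∈ (t i j).index,
              (r.left i * antipode (R := F) ((q i).right j)) ⊗ₜ[F]
                ((t i j).left m * antipode (R := F) ((t i j).right m)))
              = (r.left i * antipode (R := F) (r.right i)) ⊗ₜ[F] (1 : H) := by
            intro i _
            set Ψ : H →ₗ[F] H ⊗[F] H :=
              ((TensorProduct.mk F H H).flip 1) ∘ₗ (LinearMap.mulLeft F (r.left i)) ∘ₗ
                (antipode (R := F)) with hΨ
            have hΨa : ∀ z : H, Ψ z = (r.left i * antipode (R := F) z) ⊗ₜ[F] (1 : H) := by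
              intro z; simp [hΨ]
            calc (∑ j ∈ (q i).index, ∑ m ∈ (t i j).index,
                  (r.left i * antipode (R := F) ((q i).right j)) ⊗ₜ[F]
                    ((t i j).left m * antipode (R := F) ((t i j).right m)))
                = ∑ j ∈ (q i).index,
                    Coalgebra.counit (R := F) ((q i).left j) • Ψ ((q i).right j) := by
                  refine Finset.sum_congr rfl fun j _ => ?_
                  rw [← tmul_sum, sum_mul_antipode_eq_smul (R := F) (t i j), tmul_smul, hΨa]
              _ = Ψ (r.right i) := by
                  conv_rhs => rw [← repr_sum_counit_left (q i)]
                  simp only [map_sum, map_smul]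
              _ = _ := hΨa _
          rw [Finset.sum_congr rfl step, ← sum_tmul, sum_mul_antipode_eq_algebraMap_counit (R := F) r]
          simp [convOne, Algebra.TensorProduct.algebraMap_apply]
  calc f = conv f convOne := (conv_one_right f).symm
    _ = conv f (conv d g) := by rw [h2]
    _ = conv (conv f d) g := (conv_assoc f d g).symm
    _ = conv convOne g := by rw [h1]
    _ = g := conv_one_left g

end ComulAntipode


section TensActAux

open TensorProduct Coalgebra HopfAlgebra

variable {F H : Type*} [CommSemiring F] [Semiring H] [HopfAlgebra F H]

lemma comul_antipode_repr {h : H} {ι : Type*} (r : Coalgebra.Repr F h ι) :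
    Coalgebra.comul (R := F) (antipode (R := F) h) =
      ∑ i ∈ r.index, antipode (R := F) (r.right i) ⊗ₜ[F] antipode (R := F) (r.left i) := by
  have h1 := LinearMap.congr_fun (comul_antipode_eq (F := F) (H := H)) h
  simp only [LinearMap.comp_apply] at h1
  rw [h1, ← r.eq, map_sum, map_sum]
  simp only [LinearEquiv.coe_coe, TensorProduct.comm_tmul, TensorProduct.map_tmul]

variable {A B : Type*} [Semiring A] [Algebra F A] [Semiring B] [Algebra F B]
variable (actA : H →ₗ[F] A →ₗ[F] A) (actB : H →ₗ[F] B →ₗ[F] B)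

lemma tensAct_repr {c : H} {ι : Type*} (r : Coalgebra.Repr F c ι) (u : A ⊗[F] B) :
    tensAct F actA actB c u = ∑ i ∈ r.index,
      TensorProduct.map (actA (r.left i)) (actB (antipode (R := F) (r.right i))) u := by
  simp only [tensAct, LinearMap.comp_apply, ← r.eq, map_sum, LinearMap.sum_apply]
  refine Finset.sum_congr rfl fun i _ => ?_
  simp only [TensorProduct.lift.tmul, LinearMap.compl₂_apply, LinearMap.comp_apply,
    TensorProduct.mapBilinear_apply]

lemma act_mul_repr (hA_alg : ∀ c a a', actA c (a * a') =
      TensorProduct.lift (mulSweedler F actA a a') (Coalgebra.comul (R := F) c))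
    {c : H} {ι : Type*} (r : Coalgebra.Repr F c ι) (a a' : A) :
    actA c (a * a') = ∑ i ∈ r.index, actA (r.left i) a * actA (r.right i) a' := by
  rw [hA_alg, ← r.eq, map_sum]
  refine Finset.sum_congr rfl fun i _ => ?_
  simp [mulSweedler]

/-- Key identity: `c·(uv) = Σ (c₁·u ⊗ S c₃-part) * (c₂ · v)` in Sweedler form. -/
lemma tensAct_mul_repr
    (hA_alg : ∀ c a a', actA c (a * a') =
      TensorProduct.lift (mulSweedler F actA a a') (Coalgebra.comul (R := F) c))
    (hB_alg : ∀ c b b', actB c (b * b') =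
      TensorProduct.lift (mulSweedler F actB b b') (Coalgebra.comul (R := F) c))
    (c : H) (u v : A ⊗[F] B) {ι : Type*} {κ : ι → Type*} (r : Coalgebra.Repr F c ι)
    (s : ∀ i : r.ι, Coalgebra.Repr F (r.right i) (κ i)) :
    tensAct F actA actB c (u * v) = ∑ i ∈ r.index, ∑ j ∈ (s i).index,
      TensorProduct.map (actA (r.left i)) (actB (antipode (R := F) ((s i).right j))) u *
        tensAct F actA actB ((s i).left j) v := by
  induction u using TensorProduct.induction_on with
  | zero => simp
  | add u₁ u₂ h1 h2 =>
      simp only [add_mul, map_add, h1, h2, ← Finset.sum_add_distrib]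
  | tmul a b =>
    induction v using TensorProduct.induction_on with
    | zero => simp
    | add v₁ v₂ h1 h2 =>
        simp only [mul_add, map_add, h1, h2, ← Finset.sum_add_distrib]
    | tmul a' b' =>
      set p := fun i => Coalgebra.Repr.arbitrary F (r.left i) with hp
      set t := fun i (j : (s i).ι) => Coalgebra.Repr.arbitrary F ((s i).left j) with ht
      set Φ : H ⊗[F] (H ⊗[F] (H ⊗[F] H)) →ₗ[F] A ⊗[F] B :=
        TensorProduct.map (LinearMap.mul' F A) (LinearMap.mul' F B) ∘ₗ
          (TensorProduct.assoc F A A (B ⊗[F] B)).symm.toLinearMap ∘ₗ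
          TensorProduct.map (actA.flip a)
            (TensorProduct.map (actA.flip a')
              ((TensorProduct.map ((actB ∘ₗ antipode (R := F)).flip b)
                  ((actB ∘ₗ antipode (R := F)).flip b')) ∘ₗ
                (TensorProduct.comm F H H).toLinearMap)) with hΦ
      have hΦt : ∀ w x y z : H, Φ (w ⊗ₜ[F] (x ⊗ₜ[F] (y ⊗ₜ[F] z)))
          = (actA w a * actA x a') ⊗ₜ[F]
              (actB (antipode (R := F) z) b * actB (antipode (R := F) y) b') := by
        intro w x y z
        simp [hΦ]
      have hq2 := congrArg (⇑Φ) (quad r p s t)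
      simp only [map_sum, hΦt] at hq2
      calc tensAct F actA actB c (a ⊗ₜ[F] b * a' ⊗ₜ[F] b')
          = ∑ i ∈ r.index, actA (r.left i) (a * a') ⊗ₜ[F]
              actB (antipode (R := F) (r.right i)) (b * b') := by
            rw [Algebra.TensorProduct.tmul_mul_tmul, tensAct_repr actA actB r]
            simp only [TensorProduct.map_tmul]
        _ = ∑ i ∈ r.index, ∑ k ∈ (p i).index, ∑ l ∈ (s i).index,
              (actA ((p i).left k) a * actA ((p i).right k) a') ⊗ₜ[F]
                (actB (antipode (R := F) ((s i).right l)) b *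
                  actB (antipode (R := F) ((s i).left l)) b') := by
            refine Finset.sum_congr rfl fun i _ => ?_
            rw [act_mul_repr actA hA_alg (p i) a a',
              hB_alg, comul_antipode_repr (s i), map_sum]
            simp only [mulSweedler, TensorProduct.lift.tmul, LinearMap.mk₂_apply]
            rw [sum_tmul]
            refine Finset.sum_congr rfl fun k _ => ?_
            rw [tmul_sum]
        _ = ∑ i ∈ r.index, ∑ j ∈ (s i).index, ∑ m ∈ (t i j).index,
              (actA (r.left i) a * actA ((t i j).left m) a') ⊗ₜ[F]
                (actB (antipode (R := F) ((s i).right j)) b *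
                  actB (antipode (R := F) ((t i j).right m)) b') := hq2
        _ = ∑ i ∈ r.index, ∑ j ∈ (s i).index,
              TensorProduct.map (actA (r.left i))
                  (actB (antipode (R := F) ((s i).right j))) (a ⊗ₜ[F] b) *
                tensAct F actA actB ((s i).left j) (a' ⊗ₜ[F] b') := by
            refine Finset.sum_congr rfl fun i _ => ?_
            refine Finset.sum_congr rfl fun j _ => ?_
            rw [TensorProduct.map_tmul, tensAct_repr actA actB (t i j), Finset.mul_sum]
            refine Finset.sum_congr rfl fun m _ => ?_
            rw [TensorProduct.map_tmul, Algebra.TensorProduct.tmul_mul_tmul]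

end TensActAux

/-- Lemma 2.1(a). Let `H` be a Hopf algebra over a field `F`, `A` a left
`H`-module algebra and `B` a right `H`-module algebra. Equip `A ⊗ B` with the left `H`-module
structure `c·(a⊗b) = (c₍₁₎·a) ⊗ (b·S(c₍₂₎))`. Then the space of invariants `(A⊗B)^H` is a
subalgebra of `A ⊗ B`. -/
theorem invariants_subalgebra (F H A B : Type*) [Field F] [Ring H] [HopfAlgebra F H]
    [Ring A] [Algebra F A] [Ring B] [Algebra F B]
    (actA : H →ₗ[F] A →ₗ[F] A)
    (hA_one : ∀ a, actA 1 a = a)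
    (hA_mul : ∀ c c' a, actA (c * c') a = actA c (actA c' a))
    (hA_alg : ∀ c a a', actA c (a * a') =
      TensorProduct.lift (mulSweedler F actA a a') (Coalgebra.comul (R := F) c))
    (hA_unit : ∀ c, actA c (1 : A) = Coalgebra.counit (R := F) c • (1 : A))
    (actB : H →ₗ[F] B →ₗ[F] B)
    (hB_one : ∀ b, actB 1 b = b)
    (hB_mul : ∀ c c' b, actB (c * c') b = actB c' (actB c b))
    (hB_alg : ∀ c b b', actB c (b * b') =
      TensorProduct.lift (mulSweedler F actB b b') (Coalgebra.comul (R := F) c))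
    (hB_unit : ∀ c, actB c (1 : B) = Coalgebra.counit (R := F) c • (1 : B)) :
    ∃ S : Subalgebra F (A ⊗[F] B),
      (S : Set (A ⊗[F] B)) =
        {u | ∀ c : H, tensAct F actA actB c u = Coalgebra.counit (R := F) c • u} := by
  classical
  have hone : ∀ c : H, tensAct F actA actB c (1 : A ⊗[F] B) =
      Coalgebra.counit (R := F) c • (1 : A ⊗[F] B) := by
    intro c
    set r := Coalgebra.Repr.arbitrary F c with hr
    rw [Algebra.TensorProduct.one_def, tensAct_repr actA actB r]
    calc ∑ i ∈ r.index, TensorProduct.map (actA (r.left i))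
            (actB (HopfAlgebra.antipode (R := F) (r.right i))) ((1 : A) ⊗ₜ[F] (1 : B))
        = ∑ i ∈ r.index, (Coalgebra.counit (R := F) (r.left i) *
            Coalgebra.counit (R := F) (r.right i)) • ((1 : A) ⊗ₜ[F] (1 : B)) := by
          refine Finset.sum_congr rfl fun i _ => ?_
          rw [TensorProduct.map_tmul, hA_unit, hB_unit, counit_antipode',
            tmul_smul, ← smul_tmul', smul_smul, mul_comm]
      _ = Coalgebra.counit (R := F) c • ((1 : A) ⊗ₜ[F] (1 : B)) := by
          rw [← Finset.sum_smul, repr_sum_counit_counit r]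
  have hmul : ∀ u v : A ⊗[F] B,
      (∀ c : H, tensAct F actA actB c u = Coalgebra.counit (R := F) c • u) →
      (∀ c : H, tensAct F actA actB c v = Coalgebra.counit (R := F) c • v) →
      ∀ c : H, tensAct F actA actB c (u * v) = Coalgebra.counit (R := F) c • (u * v) := by
    intro u v hu hv c
    set r := Coalgebra.Repr.arbitrary F c with hr
    set s := fun i => Coalgebra.Repr.arbitrary F (r.right i) with hs
    rw [tensAct_mul_repr actA actB hA_alg hB_alg c u v r s]
    calc ∑ i ∈ r.index, ∑ j ∈ (s i).index,
          TensorProduct.map (actA (r.left i))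
              (actB (HopfAlgebra.antipode (R := F) ((s i).right j))) u *
            tensAct F actA actB ((s i).left j) v
        = ∑ i ∈ r.index, ∑ j ∈ (s i).index,
            Coalgebra.counit (R := F) ((s i).left j) •
              (TensorProduct.map (actA (r.left i))
                (actB (HopfAlgebra.antipode (R := F) ((s i).right j))) u * v) := by
          refine Finset.sum_congr rfl fun i _ => Finset.sum_congr rfl fun j _ => ?_
          rw [hv, mul_smul_comm]
      _ = ∑ i ∈ r.index, TensorProduct.map (actA (r.left i))
            (actB (HopfAlgebra.antipode (R := F) (r.right i))) u * v := by
          refine Finset.sum_congr rfl fun i _ => ?_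
          set Ξ : H →ₗ[F] A ⊗[F] B :=
            (((TensorProduct.mapBilinear (RingHom.id F) A B A B) (actA (r.left i)) ∘ₗ
              (actB ∘ₗ HopfAlgebra.antipode (R := F))).flip) u with hΞdef
          have hΞ : ∀ h' : H, Ξ h' = TensorProduct.map (actA (r.left i))
              (actB (HopfAlgebra.antipode (R := F) h')) u := by
            intro h'
            simp [hΞdef, TensorProduct.mapBilinear_apply]
          calc ∑ j ∈ (s i).index, Coalgebra.counit (R := F) ((s i).left j) •
                (TensorProduct.map (actA (r.left i))
                  (actB (HopfAlgebra.antipode (R := F) ((s i).right j))) u * v)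
              = (∑ j ∈ (s i).index,
                  Coalgebra.counit (R := F) ((s i).left j) • Ξ ((s i).right j)) * v := by
                rw [Finset.sum_mul]
                refine Finset.sum_congr rfl fun j _ => ?_
                rw [hΞ, smul_mul_assoc]
            _ = Ξ (r.right i) * v := by
                conv_rhs => rw [← repr_sum_counit_left (s i)]
                rw [map_sum]
                simp only [map_smul]
            _ = _ := by rw [hΞ]
      _ = tensAct F actA actB c u * v := by
          rw [← Finset.sum_mul, ← tensAct_repr actA actB r u]
      _ = Coalgebra.counit (R := F) c • (u * v) := by rw [hu c, smul_mul_assoc]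
  refine ⟨{ carrier := {u | ∀ c : H, tensAct F actA actB c u =
              Coalgebra.counit (R := F) c • u}
            mul_mem' := fun {u v} hu hv => hmul u v hu hv
            one_mem' := hone
            add_mem' := fun {u v} hu hv c => by rw [map_add, hu c, hv c, smul_add]
            zero_mem' := fun c => by simp
            algebraMap_mem' := fun x c => by
              rw [Algebra.algebraMap_eq_smul_one, map_smul, hone c, smul_comm] }, rfl⟩
end

section
/- For every α ∈ V^{ı*}_{n,m,d}, every 0 ≤ a ≤ d−1 and every 𝐣 ∈ m̲^d, one has ρ_{n,m,d}(α)(v_𝐣 T_a) = (ρ_{n,m,d}(α) v_𝐣) T_a, where T_a denotes the explicit type-B Hecke operators on 𝕍_M^{⊗d} and 𝕍_N^{⊗d} respectively; that is, every map in the image of ρ_{n,m,d} commutes with the right Hecke-operator actions. -/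
set_option synthInstance.maxHeartbeats 800000
set_option maxHeartbeats 1600000

noncomputable section
open scoped TensorProduct
open TensorProduct

/-- The ground field `K = ℂ(q)`. -/
abbrev KK : Type := RatFunc ℂ

/-- The indeterminate `q ∈ ℂ(q)`. -/
noncomputable def qq : KK := RatFunc.X

namespace IQG

/-! ### The quantum general linear group `U_N`, `N = ν + 1`.

We parametrize by `ν = 2n ∈ ℕ` (`n ∈ ½ℕ`), so `N = ν + 1 = 2n + 1`.  The index set
`n̲ = {−n, …, n}` is identified with `Fin (ν+1)` via `i ↦ i − n`, and
`𝕀_n = {−n+½, …, n−½}` with `Fin ν` via `i ↦ i − n + ½`.  Under this identification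
the negation map `i ↦ −i` becomes `Fin.rev`, an element `i ∈ n̲` satisfies `i > 0`
iff `2·i > ν`, and `i = 0` iff `2·i = ν`. -/

/-- Generators of `U_N`: `E_i, F_i (i ∈ 𝕀_n)`, `D_a^{±1} (a ∈ n̲)`. -/
inductive UGen (ν : ℕ) : Type
  | E : Fin ν → UGen ν
  | F : Fin ν → UGen ν
  | D : Fin (ν + 1) → UGen ν
  | Dinv : Fin (ν + 1) → UGen ν

abbrev UFree (ν : ℕ) := FreeAlgebra KK (UGen ν)

namespace UFree
variable {ν : ℕ}
def e (i : Fin ν) : UFree ν := FreeAlgebra.ι KK (UGen.E i)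
def f (i : Fin ν) : UFree ν := FreeAlgebra.ι KK (UGen.F i)
def d (a : Fin (ν + 1)) : UFree ν := FreeAlgebra.ι KK (UGen.D a)
def dinv (a : Fin (ν + 1)) : UFree ν := FreeAlgebra.ι KK (UGen.Dinv a)
/-- `K_i = D_{i−½} D_{i+½}^{-1}`. -/
def k (i : Fin ν) : UFree ν := d i.castSucc * dinv i.succ
/-- `K_i^{-1} = D_{i−½}^{-1} D_{i+½}`. -/
def kinv (i : Fin ν) : UFree ν := dinv i.castSucc * d i.succ
end UFree

/-- The defining relations of `U_N` (in the identification described above,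
`δ_{a−½,i}` becomes `δ_{a,i+1}` and `δ_{a+½,i}` becomes `δ_{a,i}`). -/
inductive URel (ν : ℕ) : UFree ν → UFree ν → Prop
  | dd_inv (a) : URel ν (UFree.d a * UFree.dinv a) 1
  | dinv_d (a) : URel ν (UFree.dinv a * UFree.d a) 1
  | dd (a b) : URel ν (UFree.d a * UFree.d b) (UFree.d b * UFree.d a)
  | ddinv (a b) : URel ν (UFree.d a * UFree.dinv b) (UFree.dinv b * UFree.d a)
  | dinvdinv (a b) : URel ν (UFree.dinv a * UFree.dinv b) (UFree.dinv b * UFree.dinv a)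
  | de (a : Fin (ν+1)) (i : Fin ν) : URel ν (UFree.d a * UFree.e i)
      (((if (a : ℕ) = (i : ℕ) + 1 then qq else 1) * (if (a : ℕ) = (i : ℕ) then qq⁻¹ else 1)) •
        (UFree.e i * UFree.d a))
  | df (a : Fin (ν+1)) (i : Fin ν) : URel ν (UFree.d a * UFree.f i)
      (((if (a : ℕ) = (i : ℕ) then qq else 1) * (if (a : ℕ) = (i : ℕ) + 1 then qq⁻¹ else 1)) •
        (UFree.f i * UFree.d a))
  | ef (i j : Fin ν) : URel ν (UFree.e i * UFree.f j - UFree.f j * UFree.e i)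
      (if i = j then (qq - qq⁻¹)⁻¹ • (UFree.k i - UFree.kinv i) else 0)
  | ee (i j : Fin ν) (h : 1 < ((i : ℤ) - (j : ℤ)).natAbs) :
      URel ν (UFree.e i * UFree.e j) (UFree.e j * UFree.e i)
  | ff (i j : Fin ν) (h : 1 < ((i : ℤ) - (j : ℤ)).natAbs) :
      URel ν (UFree.f i * UFree.f j) (UFree.f j * UFree.f i)
  | serre_e (i j : Fin ν) (h : ((i : ℤ) - (j : ℤ)).natAbs = 1) :
      URel ν (UFree.e i * UFree.e i * UFree.e j + UFree.e j * (UFree.e i * UFree.e i))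
        ((qq + qq⁻¹) • (UFree.e i * UFree.e j * UFree.e i))
  | serre_f (i j : Fin ν) (h : ((i : ℤ) - (j : ℤ)).natAbs = 1) :
      URel ν (UFree.f i * UFree.f i * UFree.f j + UFree.f j * (UFree.f i * UFree.f i))
        ((qq + qq⁻¹) • (UFree.f i * UFree.f j * UFree.f i))

/-- The quantum general linear group `U_N = U_q(gl_N)`, `N = ν + 1`. -/
abbrev U (ν : ℕ) := RingQuot (URel ν)

def Umk (ν : ℕ) : UFree ν →ₐ[KK] U ν := RingQuot.mkAlgHom KK (URel ν)

def UE {ν : ℕ} (i : Fin ν) : U ν := Umk ν (UFree.e i)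
def UF {ν : ℕ} (i : Fin ν) : U ν := Umk ν (UFree.f i)
def UD {ν : ℕ} (a : Fin (ν + 1)) : U ν := Umk ν (UFree.d a)
def UDinv {ν : ℕ} (a : Fin (ν + 1)) : U ν := Umk ν (UFree.dinv a)
def UK {ν : ℕ} (i : Fin ν) : U ν := Umk ν (UFree.k i)
def UKinv {ν : ℕ} (i : Fin ν) : U ν := Umk ν (UFree.kinv i)

/-! ### The ıquantum group `U_n^ı` -/

/-- `e_i = E_i + K_i^{-1} F_{−i}` (negation on `𝕀_n` is `Fin.rev`). -/
def ie {ν : ℕ} (i : Fin ν) : U ν := UE i + UKinv i * UF i.rev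
/-- `f_i = E_{−i} + F_i K_{−i}^{-1}`. -/
def iff' {ν : ℕ} (i : Fin ν) : U ν := UE i.rev + UF i * UKinv i.rev
/-- `d_a = D_a D_{−a}`. -/
def idd {ν : ℕ} (a : Fin (ν + 1)) : U ν := UD a * UD a.rev
/-- `t = E_0 + q F_0 K_0^{-1} + K_0^{-1}` (where `0 ∈ 𝕀_n` is the index `i` with `2i = ν - 1`;
it exists only when `ν` is odd, i.e. `n ∈ ½ + ℕ`). -/
def it {ν : ℕ} (i : Fin ν) : U ν := UE i + qq • (UF i * UKinv i) + UKinv i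

/-- The generating set of the ıquantum group `U_n^ı ⊆ U_N`. -/
def iGenSet (ν : ℕ) : Set (U ν) :=
  {x | (∃ i, x = ie i) ∨ (∃ i, x = iff' i) ∨
    (∃ a : Fin (ν + 1), ν ≤ 2 * (a : ℕ) ∧ x = idd a) ∨
    (∃ h : Odd ν, x = it ⟨(ν - 1) / 2, by rcases h with ⟨k, hk⟩; omega⟩)}

/-- The ıquantum group `U_n^ı`, a subalgebra of `U_N`. -/
def Ui (ν : ℕ) : Subalgebra KK (U ν) := Algebra.adjoin KK (iGenSet ν)

/-! ### Hopf-algebra structure data on `U_N`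

The coproduct, counit, and antipode of `U_N` are algebra homomorphisms determined by their
(standard) values on the generators; we package these values as a structure. -/

structure HopfData (ν : ℕ) where
  Δ : U ν →ₐ[KK] (U ν ⊗[KK] U ν)
  ε : U ν →ₐ[KK] KK
  S : U ν →ₐ[KK] (U ν)ᵐᵒᵖ
  ΔE : ∀ i, Δ (UE i) = UE i ⊗ₜ UKinv i + 1 ⊗ₜ UE i
  ΔF : ∀ i, Δ (UF i) = UF i ⊗ₜ 1 + UK i ⊗ₜ UF i
  ΔD : ∀ a, Δ (UD a) = UD a ⊗ₜ UD a
  ΔDinv : ∀ a, Δ (UDinv a) = UDinv a ⊗ₜ UDinv a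
  εE : ∀ i, ε (UE i) = 0
  εF : ∀ i, ε (UF i) = 0
  εD : ∀ a, ε (UD a) = 1
  εDinv : ∀ a, ε (UDinv a) = 1
  SE : ∀ i, S (UE i) = MulOpposite.op (-(UE i * UK i))
  SF : ∀ i, S (UF i) = MulOpposite.op (-(UKinv i * UF i))
  SD : ∀ a, S (UD a) = MulOpposite.op (UDinv a)
  SDinv : ∀ a, S (UDinv a) = MulOpposite.op (UD a)

/-! ### The natural representation `𝕍_N` and its matrix coefficients

`𝕍_N` has basis `{v_j : j ∈ n̲}`; the matrix coefficients `t_{ij} ∈ U_N^*` satisfy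
`x v_j = Σ_i ⟨t_{ij}, x⟩ v_i`, i.e. `⟨t_{ij}, x⟩ = (ρ x) i j` for the matrix
representation `ρ`. -/

structure RepData (ν : ℕ) where
  ρ : U ν →ₐ[KK] Matrix (Fin (ν + 1)) (Fin (ν + 1)) KK
  ρE : ∀ i, ρ (UE i) = Matrix.single i.castSucc i.succ 1
  ρF : ∀ i, ρ (UF i) = Matrix.single i.succ i.castSucc 1
  ρD : ∀ a, ρ (UD a) = Matrix.diagonal (fun b => if b = a then qq else 1)
  ρDinv : ∀ a, ρ (UDinv a) = Matrix.diagonal (fun b => if b = a then qq⁻¹ else 1)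

/-! ### The quantum coordinate algebra `V_{N,M}` -/

/-- Generators `t_{ij}`, `i ∈ n̲`, `j ∈ m̲` (`ν = 2n`, `μ = 2m`). -/
abbrev VFree (ν μ : ℕ) := FreeAlgebra KK (Fin (ν + 1) × Fin (μ + 1))

def tf {ν μ : ℕ} (i : Fin (ν + 1)) (j : Fin (μ + 1)) : VFree ν μ := FreeAlgebra.ι KK (i, j)

/-- The defining relations of the quantum coordinate algebra `V_{N,M}`. -/
inductive VRel (ν μ : ℕ) : VFree ν μ → VFree ν μ → Prop
  | r1 (i k : Fin (ν+1)) (j l : Fin (μ+1)) (h1 : i < k) (h2 : j < l) :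
      VRel ν μ (tf i j * tf k l) (tf k l * tf i j + (qq - qq⁻¹) • (tf i l * tf k j))
  | r2 (i k : Fin (ν+1)) (j l : Fin (μ+1)) (h1 : i < k) (h2 : j < l) :
      VRel ν μ (tf i l * tf k j) (tf k j * tf i l)
  | r3 (i : Fin (ν+1)) (j l : Fin (μ+1)) (h2 : j < l) :
      VRel ν μ (tf i j * tf i l) (qq • (tf i l * tf i j))
  | r4 (i k : Fin (ν+1)) (j : Fin (μ+1)) (h1 : i < k) :
      VRel ν μ (tf i j * tf k j) (qq • (tf k j * tf i j))

/-- The quantum coordinate algebra `V_{N,M}` (`N = ν+1`, `M = μ+1`). -/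
abbrev Vc (ν μ : ℕ) := RingQuot (VRel ν μ)

def Vmk (ν μ : ℕ) : VFree ν μ →ₐ[KK] Vc ν μ := RingQuot.mkAlgHom KK (VRel ν μ)

/-- The generator `t_{ij} ∈ V_{N,M}`. -/
def Tc {ν μ : ℕ} (i : Fin (ν + 1)) (j : Fin (μ + 1)) : Vc ν μ := Vmk ν μ (tf i j)

/-- The ordered monomial `t_{iijj} = t_{i₁j₁} ⋯ t_{i_dj_d}`. -/
def tprod {ν μ : ℕ} {d : ℕ} (ii : Fin d → Fin (ν + 1)) (jj : Fin d → Fin (μ + 1)) : Vc ν μ :=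
  (List.ofFn (fun a => Tc (ii a) (jj a))).prod

end IQG
/-! ### Part 2: module-algebra structures, matrix coefficients, quotients, Hecke, minors -/

namespace IQG

/-- The bilinear map `(x, y) ↦ (x·f)(y·g)` used to state the module-algebra axiom
`c·(fg) = (c₍₁₎·f)(c₍₂₎·g)` in Sweedler-free form. -/
def mulBil {H A : Type*} [AddCommMonoid H] [Module KK H] [Semiring A] [Algebra KK A]
    (act : H →ₗ[KK] A →ₗ[KK] A) (f g : A) : H →ₗ[KK] H →ₗ[KK] A :=
  LinearMap.mk₂ KK (fun x y => act x f * act y g)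
    (fun x x' y => by simp [add_mul]) (fun c x y => by simp [smul_mul_assoc])
    (fun x y y' => by simp [mul_add]) (fun c x y => by simp [mul_smul_comm])

/-- The structure of a left `U_M`-module algebra on `V_{N,M}` (`ν = 2n`, `μ = 2m`),
with the action determined on generators by `x·t_{ij} = Σ_k ⟨t_{kj}, x⟩ t_{ik}`. -/
structure LModAlg (ν μ : ℕ) (hd : HopfData μ) (rd : RepData μ) where
  act : U μ →ₗ[KK] Vc ν μ →ₗ[KK] Vc ν μ
  act_one : act 1 = LinearMap.id
  act_mul : ∀ x y, act (x * y) = act x ∘ₗ act y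
  act_unit : ∀ x, act x (1 : Vc ν μ) = hd.ε x • (1 : Vc ν μ)
  act_alg : ∀ x f g, act x (f * g) = TensorProduct.lift (mulBil act f g) (hd.Δ x)
  act_gen : ∀ x i j, act x (Tc i j) = ∑ k, rd.ρ x k j • Tc i k

/-- The structure of a right `U_N`-module algebra on `V_{N,M}` (the right action written on
the left: `act y f = f·y`), determined on generators by `t_{ij}·y = Σ_k ⟨t_{ik}, y⟩ t_{kj}`. -/
structure RModAlg (ν μ : ℕ) (hd : HopfData ν) (rd : RepData ν) where
  act : U ν →ₗ[KK] Vc ν μ →ₗ[KK] Vc ν μ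
  act_one : act 1 = LinearMap.id
  act_mul : ∀ x y, act (x * y) = act y ∘ₗ act x
  act_unit : ∀ y, act y (1 : Vc ν μ) = hd.ε y • (1 : Vc ν μ)
  act_alg : ∀ y f g, act y (f * g) = TensorProduct.lift (mulBil act f g) (hd.Δ y)
  act_gen : ∀ y i j, act y (Tc i j) = ∑ k, rd.ρ y i k • Tc k j

/-- The matrix entry `(i,j)` as a linear functional on matrices. -/
def entryLM {m : Type*} (i j : m) : Matrix m m KK →ₗ[KK] KK where
  toFun M := M i j
  map_add' _ _ := rfl
  map_smul' _ _ := rfl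

/-- The matrix coefficients `x_{iijj} = Π_a ⟨t_{ii(a) jj(a)}, x₍ₐ₎⟩` of the `d`-th tensor
power of the natural representation, where `Δ^{(d−1)}(x) = x₍₁₎ ⊗ ⋯ ⊗ x₍d₎` is the iterated
coproduct (for `d = 0` this is the counit, for `d = 1` the matrix representation itself). -/
def matCoeff {μ : ℕ} (hd : HopfData μ) (rd : RepData μ) :
    (d : ℕ) → U μ →ₗ[KK] ((Fin d → Fin (μ + 1)) → (Fin d → Fin (μ + 1)) → KK)
  | 0 => LinearMap.pi fun _ => LinearMap.pi fun _ => hd.ε.toLinearMap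
  | 1 => LinearMap.pi fun ii => LinearMap.pi fun jj =>
      (entryLM (ii 0) (jj 0)).comp rd.ρ.toLinearMap
  | d + 2 =>
    (TensorProduct.lift (LinearMap.mk₂ KK
      (fun x y => fun ii jj =>
        rd.ρ x (ii 0) (jj 0) * matCoeff hd rd (d + 1) y (Fin.tail ii) (Fin.tail jj))
      (fun x x' y => by
        funext ii jj
        simp [map_add, Matrix.add_apply, add_mul, Pi.add_apply])
      (fun c x y => by
        funext ii jj
        simp [map_smul, Matrix.smul_apply, Pi.smul_apply, smul_eq_mul, mul_assoc])
      (fun x y y' => by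
        funext ii jj
        simp [map_add, mul_add, Pi.add_apply])
      (fun c x y => by
        funext ii jj
        simp [map_smul, Pi.smul_apply, smul_eq_mul]; ring))) ∘ₗ hd.Δ.toLinearMap

end IQG
namespace IQG

/-! ### The ı-coordinate module `V^ı_{n,m} = V_{N,M} / I_{n,m}` -/

/-- The right ideal of an algebra generated by a set `S`, as a `KK`-submodule. -/
def rIdealSpan {A : Type*} [Semiring A] [Algebra KK A] (S : Set A) : Submodule KK A :=
  Submodule.span KK {x | ∃ s ∈ S, ∃ v : A, x = s * v}

/-- The generators of the right ideal `I_{n,m}` of `V_{N,M}`.  Recall `i > 0` iff `ν < 2i`,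
`−i = i.rev`, and the index `0 ∈ m̲` (present iff `μ` is even, i.e. `m ∈ ℤ`) is `μ/2`. -/
def iIdealGens (ν μ : ℕ) : Set (Vc ν μ) :=
  {x | (∃ i : Fin (ν + 1), ∃ j : Fin (μ + 1), ν < 2 * (i : ℕ) ∧ μ < 2 * (j : ℕ) ∧
        x = Tc i j - Tc i.rev j.rev + (qq⁻¹ - qq) • Tc i j.rev) ∨
    (∃ i : Fin (ν + 1), ∃ j : Fin (μ + 1), ν < 2 * (i : ℕ) ∧ μ < 2 * (j : ℕ) ∧
        x = Tc i j.rev - Tc i.rev j) ∨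
    (∃ i : Fin (ν + 1), ν < 2 * (i : ℕ) ∧ Even μ ∧
        x = Tc i ⟨μ / 2, by omega⟩ - qq • Tc i.rev ⟨μ / 2, by omega⟩) ∨
    (∃ j : Fin (μ + 1), μ < 2 * (j : ℕ) ∧ Even ν ∧
        x = Tc ⟨ν / 2, by omega⟩ j - qq • Tc ⟨ν / 2, by omega⟩ j.rev)}

/-- The right ideal `I_{n,m} ⊆ V_{N,M}` (as a `KK`-submodule). -/
def Isub (ν μ : ℕ) : Submodule KK (Vc ν μ) := rIdealSpan (iIdealGens ν μ)

/-- `V^ı_{n,m} = V_{N,M} / I_{n,m}`. -/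
abbrev Viq (ν μ : ℕ) := Vc ν μ ⧸ Isub ν μ

/-- The canonical projection `f ↦ f̃`. -/
def Vimk (ν μ : ℕ) : Vc ν μ →ₗ[KK] Viq ν μ := (Isub ν μ).mkQ

/-- `t̃_{iijj} ∈ V^ı_{n,m}`. -/
def itprod {ν μ d : ℕ} (ii : Fin d → Fin (ν + 1)) (jj : Fin d → Fin (μ + 1)) : Viq ν μ :=
  Vimk ν μ (tprod ii jj)

lemma Isub_mul_mem {ν μ : ℕ} {x : Vc ν μ} (hx : x ∈ Isub ν μ) (g : Vc ν μ) :
    x * g ∈ Isub ν μ := by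
  induction hx using Submodule.span_induction with
  | mem y hy =>
    obtain ⟨s, hs, v, rfl⟩ := hy
    exact Submodule.subset_span ⟨s, hs, v * g, (mul_assoc s v g)⟩
  | zero => simpa using (Isub ν μ).zero_mem
  | add y z _ _ hy hz => simpa [add_mul] using (Isub ν μ).add_mem hy hz
  | smul c y _ hy => simpa [smul_mul_assoc] using (Isub ν μ).smul_mem c hy

/-- Right multiplication by `g ∈ V_{N,M}` descends to `V^ı_{n,m}` (as `I_{n,m}` is a right
ideal); this makes `V^ı_{n,m}` a right `V_{N,M}`-module. -/
def rmulQ {ν μ : ℕ} (g : Vc ν μ) : Viq ν μ →ₗ[KK] Viq ν μ :=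
  Submodule.liftQ (Isub ν μ) ((Vimk ν μ) ∘ₗ (LinearMap.mulRight KK g)) (by
    intro x hx
    simp only [LinearMap.mem_ker, LinearMap.comp_apply, LinearMap.mulRight_apply]
    rw [Vimk, Submodule.mkQ_apply, Submodule.Quotient.mk_eq_zero]
    exact Isub_mul_mem hx g)

/-- The degree-`d` homogeneous component `V^ı_{n,m,d}`: the span of the `t̃_{iijj}` with
`ii ∈ n̲^d`, `jj ∈ m̲^d`. -/
def Vid (ν μ d : ℕ) : Submodule KK (Viq ν μ) :=
  Submodule.span KK {x | ∃ ii jj, x = itprod (ν := ν) (μ := μ) (d := d) ii jj}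

lemma itprod_mem {ν μ d : ℕ} (ii : Fin d → Fin (ν + 1)) (jj : Fin d → Fin (μ + 1)) :
    itprod ii jj ∈ Vid ν μ d :=
  Submodule.subset_span ⟨ii, jj, rfl⟩

/-- `t̃_{iijj}` as an element of `V^ı_{n,m,d}`. -/
def itprodD {ν μ d : ℕ} (ii : Fin d → Fin (ν + 1)) (jj : Fin d → Fin (μ + 1)) :
    ↥(Vid ν μ d) := ⟨itprod ii jj, itprod_mem ii jj⟩

/-- The map `ρ_{n,m,d} : V^{ı*}_{n,m,d} → Hom_K(𝕍_M^{⊗d}, 𝕍_N^{⊗d})`,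
`ρ(α) v_jj = Σ_ii ⟨α, t̃_{iijj}⟩ v_ii`; tensor powers are realized as function spaces with
basis indexed by tuples. -/
def rhoFun {ν μ d : ℕ} (α : Module.Dual KK ↥(Vid ν μ d)) :
    ((Fin d → Fin (μ + 1)) → KK) →ₗ[KK] ((Fin d → Fin (ν + 1)) → KK) :=
  Matrix.mulVecLin (Matrix.of fun ii jj => α (itprodD ii jj))

/-! ### Hecke operators on tensor space -/

/-- The right action of `s₀` on tuples: `ii s₀ = (−i₁, i₂, …)`. -/
def s0t {ν d : ℕ} (ii : Fin (d + 1) → Fin (ν + 1)) : Fin (d + 1) → Fin (ν + 1) :=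
  Function.update ii 0 (ii 0).rev

/-- The right action of `s_a` (`a = b+1`) on tuples: swap the entries in positions `a, a+1`
(1-indexed), i.e. `b, b+1` (0-indexed). -/
def swt {ν d : ℕ} (b : Fin d) (ii : Fin (d + 1) → Fin (ν + 1)) : Fin (d + 1) → Fin (ν + 1) :=
  ii ∘ (Equiv.swap b.castSucc b.succ)

/-- The matrix of the operator `T₀` on `𝕍_N^{⊗(d+1)}` in the row convention
`v_ii T₀ = Σ_jj (M₀)_{ii,jj} v_jj`. -/
def hMat0 (ν d : ℕ) :
    Matrix (Fin (d + 1) → Fin (ν + 1)) (Fin (d + 1) → Fin (ν + 1)) KK :=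
  Matrix.of fun ii jj =>
    if ν < 2 * ((ii 0 : ℕ)) then (if jj = s0t ii then 1 else 0)
    else if 2 * ((ii 0 : ℕ)) = ν then (if jj = s0t ii then qq⁻¹ else 0)
    else (if jj = s0t ii then 1 else 0) + (if jj = ii then qq⁻¹ - qq else 0)

/-- The matrix of the operator `T_{b+1}` on `𝕍_N^{⊗(d+1)}` in the row convention. -/
def hMatS (ν : ℕ) {d : ℕ} (b : Fin d) :
    Matrix (Fin (d + 1) → Fin (ν + 1)) (Fin (d + 1) → Fin (ν + 1)) KK :=
  Matrix.of fun ii jj =>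
    if ii b.castSucc < ii b.succ then (if jj = swt b ii then 1 else 0)
    else if ii b.castSucc = ii b.succ then (if jj = ii then qq⁻¹ else 0)
    else (if jj = swt b ii then 1 else 0) + (if jj = ii then qq⁻¹ - qq else 0)

/-! ### The Hecke algebra of type `B_d`, `d = dm + 1` -/

inductive HGen (dm : ℕ) : Type
  | T0 : HGen dm
  | Ts : Fin dm → HGen dm

abbrev HFree (dm : ℕ) := FreeAlgebra KK (HGen dm)
def hg0 {dm : ℕ} : HFree dm := FreeAlgebra.ι KK HGen.T0
def hgs {dm : ℕ} (b : Fin dm) : HFree dm := FreeAlgebra.ι KK (HGen.Ts b)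

/-- The defining relations of the Hecke algebra `H_{B_d}` (`d = dm + 1`), with generators
`T₀` and `T_{b+1} (b ∈ Fin dm)`. -/
inductive HRel (dm : ℕ) : HFree dm → HFree dm → Prop
  | quad0 : HRel dm ((hg0 - algebraMap KK _ qq⁻¹) * (hg0 + algebraMap KK _ qq)) 0
  | quadS (b : Fin dm) : HRel dm ((hgs b - algebraMap KK _ qq⁻¹) * (hgs b + algebraMap KK _ qq)) 0
  | braid0 (b : Fin dm) (h : (b : ℕ) = 0) :
      HRel dm (hg0 * hgs b * (hg0 * hgs b)) (hgs b * hg0 * (hgs b * hg0))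
  | braidS (b c : Fin dm) (h : (b : ℕ) + 1 = (c : ℕ)) :
      HRel dm (hgs b * hgs c * hgs b) (hgs c * hgs b * hgs c)
  | comm0 (b : Fin dm) (h : 1 ≤ (b : ℕ)) : HRel dm (hg0 * hgs b) (hgs b * hg0)
  | commS (b c : Fin dm) (h : (b : ℕ) + 1 < (c : ℕ)) : HRel dm (hgs b * hgs c) (hgs c * hgs b)

/-- The Hecke algebra `H_{B_{dm+1}}` of type `B_{dm+1}`. -/
abbrev Hecke (dm : ℕ) := RingQuot (HRel dm)
def Hmk (dm : ℕ) : HFree dm →ₐ[KK] Hecke dm := RingQuot.mkAlgHom KK (HRel dm)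

/-- The generators `T₀, T₁, …, T_{dm}` of `H_{B_{dm+1}}`. -/
def HT {dm : ℕ} : Fin (dm + 1) → Hecke dm :=
  Fin.cases (Hmk dm hg0) (fun b => Hmk dm (hgs b))

/-! ### The Coxeter group `W_{B_d}` -/

/-- The Coxeter matrix of type `B_d`, with the 4-bond between the nodes `0` and `1`
(so that `s₀` is the distinguished reflection of the paper). -/
def BMat (d : ℕ) : CoxeterMatrix (Fin d) where
  M := Matrix.of fun i j =>
    if i = j then 1
    else if ((i : ℕ) = 0 ∧ (j : ℕ) = 1) ∨ ((j : ℕ) = 0 ∧ (i : ℕ) = 1) then 4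
    else if (i : ℕ) + 1 = (j : ℕ) ∨ (j : ℕ) + 1 = (i : ℕ) then 3 else 2
  isSymm := by
    unfold Matrix.IsSymm
    ext i j
    simp only [Matrix.transpose_apply, Matrix.of_apply]
    rcases eq_or_ne i j with h | h
    · simp [h]
    · simp only [h, h.symm, if_false]
      by_cases h1 : ((j : ℕ) = 0 ∧ (i : ℕ) = 1) ∨ ((i : ℕ) = 0 ∧ (j : ℕ) = 1)
      · rw [if_pos h1, if_pos (Or.symm h1)]
      · rw [if_neg h1, if_neg (fun hc => h1 (Or.symm hc))]
        by_cases h2 : (j : ℕ) + 1 = (i : ℕ) ∨ (i : ℕ) + 1 = (j : ℕ)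
        · rw [if_pos h2, if_pos (Or.symm h2)]
        · rw [if_neg h2, if_neg (fun hc => h2 (Or.symm hc))]
  diagonal := by intro i; simp
  off_diagonal := by
    intro i j h
    simp only [Matrix.of_apply, h, if_false]
    split <;> [skip; split] <;> omega

/-- The Weyl group `W_{B_d}` of type `B_d`, presented as a Coxeter group. -/
abbrev WB (d : ℕ) := (BMat d).Group

/-- The distinguished Coxeter system of `W_{B_d}`. -/
def csB (d : ℕ) : CoxeterSystem (BMat d) (WB d) := (BMat d).toCoxeterSystem

end IQG
namespace IQG

/-! ### Quantum minors and ıquantum minors -/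

/-- The length (inversion number) of a permutation. -/
def permLen {d : ℕ} (w : Equiv.Perm (Fin d)) : ℕ :=
  (Finset.univ.filter (fun p : Fin d × Fin d => p.1 < p.2 ∧ w p.2 < w p.1)).card

/-- The quantum minor `Δ(ii, jj) = Σ_{w ∈ 𝔖_d} (−q)^{ℓ(w)} t_{ii, jj∘w} ∈ V_{N,M}`
(for `ii, jj` strictly increasing). -/
def qminor {ν μ d : ℕ} (ii : Fin d → Fin (ν + 1)) (jj : Fin d → Fin (μ + 1)) : Vc ν μ :=
  ∑ w : Equiv.Perm (Fin d), ((-qq) ^ permLen w) • tprod ii (jj ∘ w)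

/-- The quantum minor `Δ(ii, kk)` for an arbitrary (injective) tuple `kk`: writing
`kk = kk' σ` with `kk'` increasing, `Δ(ii, kk' σ) = (−q)^{ℓ(σ)} Δ(ii, kk')`.
(`Tuple.sort kk` is the permutation sorting `kk`.) -/
def qminorGen {ν μ d : ℕ} (ii : Fin d → Fin (ν + 1)) (kk : Fin d → Fin (μ + 1)) : Vc ν μ :=
  ((-qq) ^ permLen (Tuple.sort kk)) • qminor ii (kk ∘ Tuple.sort kk)

/-- `n⁺ = ⌈n + ½⌉` where `ν = 2n`. -/
def nplus (ν : ℕ) : ℕ := ν / 2 + 1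
/-- `n⁻ = ⌊n + ½⌋` where `ν = 2n`. -/
def nminus (ν : ℕ) : ℕ := (ν + 1) / 2

/-- `|k| ∈ m̲` for `k ∈ m̲` (recall `k ≥ 0` iff `μ ≤ 2k`, and `−k = k.rev`). -/
def absF {μ : ℕ} (k : Fin (μ + 1)) : Fin (μ + 1) := if μ ≤ 2 * (k : ℕ) then k else k.rev

/-- `ℓ₀(kk) = #{a : kk a < 0}`. -/
def negCount {μ d : ℕ} (kk : Fin d → Fin (μ + 1)) : ℕ :=
  (Finset.univ.filter (fun a => 2 * ((kk a : ℕ)) < μ)).card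

/-- The index set `𝔄^{ı+}_{n,m}`: strictly increasing tuples in `m̲^{n⁺}` with all entries
`≥ 0`. -/
def APos (ν μ : ℕ) : Set (Fin (nplus ν) → Fin (μ + 1)) :=
  {ii | StrictMono ii ∧ ∀ a, μ ≤ 2 * ((ii a : ℕ))}

/-- The index set `𝔄^{ı−}_{n,m}`: strictly increasing tuples in `m̲^{n⁻}` with all entries
`> 0`. -/
def ANeg (ν μ : ℕ) : Set (Fin (nminus ν) → Fin (μ + 1)) :=
  {ii | StrictMono ii ∧ ∀ a, μ < 2 * ((ii a : ℕ))}

/-- The positive ıquantum `n`-minor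
`Δ^{ı+}(ii,jj) = Σ_{|kk| = jj} q^{−ℓ₀(kk)} (Δ(ii,kk))~ ∈ V^ı_{p,r}`. -/
def iminorPos {pp rr : ℕ} (ν : ℕ) (ii : Fin (nplus ν) → Fin (pp + 1))
    (jj : Fin (nplus ν) → Fin (rr + 1)) : Viq pp rr :=
  ∑ kk ∈ Finset.univ.filter
      (fun kk : Fin (nplus ν) → Fin (rr + 1) => absF ∘ kk = jj),
    (qq⁻¹ ^ negCount kk) • Vimk pp rr (qminorGen ii kk)

/-- The negative ıquantum `n`-minor
`Δ^{ı−}(ii,jj) = Σ_{|kk| = jj} (−q)^{ℓ₀(kk)} (Δ(ii,kk))~ ∈ V^ı_{p,r}`. -/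
def iminorNeg {pp rr : ℕ} (ν : ℕ) (ii : Fin (nminus ν) → Fin (pp + 1))
    (jj : Fin (nminus ν) → Fin (rr + 1)) : Viq pp rr :=
  ∑ kk ∈ Finset.univ.filter
      (fun kk : Fin (nminus ν) → Fin (rr + 1) => absF ∘ kk = jj),
    ((-qq) ^ negCount kk) • Vimk pp rr (qminorGen ii kk)

/-- `𝔐⁺`: the span of the positive ıquantum `n`-minors in `V^ı_{p,r}`. -/
def MPos (ν pp rr : ℕ) : Submodule KK (Viq pp rr) :=
  Submodule.span KK
    {x | ∃ ii ∈ APos ν pp, ∃ jj ∈ APos ν rr, x = iminorPos ν ii jj}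

/-- `𝔐⁻`: the span of the negative ıquantum `n`-minors in `V^ı_{p,r}`. -/
def MNeg (ν pp rr : ℕ) : Submodule KK (Viq pp rr) :=
  Submodule.span KK
    {x | ∃ ii ∈ ANeg ν pp, ∃ jj ∈ ANeg ν rr, x = iminorNeg ν ii jj}

/-- The right `V_{P,R}`-submodule `𝓘` of `V^ı_{p,r}` generated by `𝔐⁺ ∪ 𝔐⁻`. -/
def Iscr (ν pp rr : ℕ) : Submodule KK (Viq pp rr) :=
  Submodule.span KK
    {x | ∃ m ∈ (MPos ν pp rr : Set (Viq pp rr)) ∪ (MNeg ν pp rr : Set (Viq pp rr)),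
      ∃ g : Vc pp rr, x = rmulQ g m}

/-! ### The `U_N`-action on `P_{P,R} = V_{P,N} ⊗ V_{N,R}` and its invariants -/

/-- The left `U_N`-action on `P_{P,R} = V_{P,N} ⊗ V_{N,R}`:
`x(f⊗g) = (x₍₁₎·f) ⊗ (g·S(x₍₂₎))`. -/
def tensActV {pp ν rr : ℕ} (hd : HopfData ν) (rd : RepData ν)
    (L : LModAlg pp ν hd rd) (R : RModAlg ν rr hd rd) :
    U ν →ₗ[KK] (Vc pp ν ⊗[KK] Vc ν rr) →ₗ[KK] (Vc pp ν ⊗[KK] Vc ν rr) :=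
  (TensorProduct.lift
    (((TensorProduct.mapBilinear (RingHom.id KK) (Vc pp ν) (Vc ν rr) (Vc pp ν) (Vc ν rr)) ∘ₗ L.act).compl₂
      (R.act ∘ₗ (MulOpposite.opLinearEquiv KK).symm.toLinearMap ∘ₗ hd.S.toLinearMap))) ∘ₗ
    hd.Δ.toLinearMap

/-- The space `X_{P,R}` of `U_N`-invariants of `P_{P,R}`. -/
def XSet {pp ν rr : ℕ} (hd : HopfData ν) (rd : RepData ν)
    (L : LModAlg pp ν hd rd) (R : RModAlg ν rr hd rd) : Set (Vc pp ν ⊗[KK] Vc ν rr) :=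
  {u | ∀ x : U ν, tensActV hd rd L R x u = hd.ε x • u}

/-- The invariant `X_{ij} = Σ_k t_{ik} ⊗ t_{kj} ∈ P_{P,R}`. -/
def XEl (pp ν rr : ℕ) (i : Fin (pp + 1)) (j : Fin (rr + 1)) : Vc pp ν ⊗[KK] Vc ν rr :=
  ∑ k : Fin (ν + 1), Tc i k ⊗ₜ[KK] Tc k j

end IQG
namespace IQG

/-- The full family `T₀, …, T_{d−1}` of Hecke-operator matrices on `𝕍_M^{⊗d}`. -/
def hMatAll (μ : ℕ) : {d : ℕ} → Fin d →
    Matrix (Fin d → Fin (μ + 1)) (Fin d → Fin (μ + 1)) KK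
  | 0, a => a.elim0
  | _ + 1, a => Fin.cases (hMat0 μ _) (fun b => hMatS μ b) a

lemma rmulQ_add {ν μ : ℕ} (g g' : Vc ν μ) : rmulQ (g + g') = rmulQ g + rmulQ g' := by
  apply LinearMap.ext
  intro v
  obtain ⟨f, rfl⟩ := (Isub ν μ).mkQ_surjective v
  simp [rmulQ, Vimk, mul_add]

lemma rmulQ_smul {ν μ : ℕ} (c : KK) (g : Vc ν μ) : rmulQ (c • g) = c • rmulQ g := by
  apply LinearMap.ext
  intro v
  obtain ⟨f, rfl⟩ := (Isub ν μ).mkQ_surjective v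
  simp [rmulQ, Vimk, mul_smul_comm]

/-- The right `V_{P,N} ⊗ V_{N,R}`-action on `P^ı_{p,r} = V^ı_{p,n} ⊗ V^ı_{n,r}` by
componentwise right multiplication. -/
def rmulT {pp ν rr : ℕ} :
    (Vc pp ν ⊗[KK] Vc ν rr) →ₗ[KK]
      (Viq pp ν ⊗[KK] Viq ν rr) →ₗ[KK] (Viq pp ν ⊗[KK] Viq ν rr) :=
  TensorProduct.lift (LinearMap.mk₂ KK
    (fun g1 g2 => TensorProduct.map (rmulQ g1) (rmulQ g2))
    (fun g g' g2 => by rw [rmulQ_add]; exact TensorProduct.map_add_left _ _ _)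
    (fun c g g2 => by rw [rmulQ_smul]; exact TensorProduct.map_smul_left _ _ _)
    (fun g g2 g2' => by rw [rmulQ_add]; exact TensorProduct.map_add_right _ _ _)
    (fun c g g2 => by rw [rmulQ_smul]; exact TensorProduct.map_smul_right _ _ _))

lemma rhoFun_add {ν μ d : ℕ} (α α' : Module.Dual KK ↥(Vid ν μ d)) :
    rhoFun (α + α') = rhoFun α + rhoFun α' := by
  apply LinearMap.ext
  intro v
  funext ii
  simp [rhoFun, Matrix.mulVecLin_apply, Matrix.mulVec, dotProduct, add_mul,
    Finset.sum_add_distrib]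

lemma rhoFun_smul {ν μ d : ℕ} (c : KK) (α : Module.Dual KK ↥(Vid ν μ d)) :
    rhoFun (c • α) = c • rhoFun α := by
  apply LinearMap.ext
  intro v
  funext ii
  simp [rhoFun, Matrix.mulVecLin_apply, Matrix.mulVec, dotProduct, Finset.mul_sum,
    mul_assoc]

/-- The bilinear composition map `(α, β) ↦ ρ_{p,n,d}(α) ∘ ρ_{n,r,d}(β)`. -/
def rhoBil (pp ν rr d : ℕ) :
    Module.Dual KK ↥(Vid pp ν d) →ₗ[KK] Module.Dual KK ↥(Vid ν rr d) →ₗ[KK]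
      (((Fin d → Fin (rr + 1)) → KK) →ₗ[KK] ((Fin d → Fin (pp + 1)) → KK)) :=
  LinearMap.mk₂ KK (fun α β => rhoFun α ∘ₗ rhoFun β)
    (fun α α' β => by rw [rhoFun_add]; ext v; simp)
    (fun c α β => by rw [rhoFun_smul]; ext v; simp)
    (fun α β β' => by rw [rhoFun_add]; ext v; simp)
    (fun c α β => by rw [rhoFun_smul]; ext v; simp)

/-- The set of quantum `N`-minors `Δ(ii,jj)`, `ii ∈ 𝔄_{N,P}`, `jj ∈ 𝔄_{N,R}`, in `V_{P,R}`. -/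
def NminorSet (ν pp rr : ℕ) : Set (Vc pp rr) :=
  {f | ∃ ii : Fin (ν + 1) → Fin (pp + 1), ∃ jj : Fin (ν + 1) → Fin (rr + 1),
    StrictMono ii ∧ StrictMono jj ∧ f = qminor ii jj}

end IQG
namespace IQG


lemma Vmk_rel {ν μ : ℕ} {x y : VFree ν μ} (h : VRel ν μ x y) : Vmk ν μ x = Vmk ν μ y :=
  RingQuot.mkAlgHom_rel KK h

lemma Tc_r1 {ν μ : ℕ} {i k : Fin (ν+1)} {j l : Fin (μ+1)} (h1 : i < k) (h2 : j < l) :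
    Tc (ν := ν) i j * Tc k l = Tc k l * Tc i j + (qq - qq⁻¹) • (Tc i l * Tc k j) := by
  have := Vmk_rel (VRel.r1 i k j l h1 h2)
  simpa [Tc, map_add, map_mul, map_smul] using this

lemma Tc_r2 {ν μ : ℕ} {i k : Fin (ν+1)} {j l : Fin (μ+1)} (h1 : i < k) (h2 : j < l) :
    Tc (ν := ν) i l * Tc k j = Tc k j * Tc i l := by
  have := Vmk_rel (VRel.r2 i k j l h1 h2)
  simpa [Tc, map_mul] using this

lemma Tc_r3 {ν μ : ℕ} {i : Fin (ν+1)} {j l : Fin (μ+1)} (h2 : j < l) :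
    Tc (ν := ν) i j * Tc i l = qq • (Tc i l * Tc i j) := by
  have := Vmk_rel (VRel.r3 i j l h2)
  simpa [Tc, map_mul, map_smul] using this

lemma Tc_r4 {ν μ : ℕ} {i k : Fin (ν+1)} {j : Fin (μ+1)} (h1 : i < k) :
    Tc (ν := ν) i j * Tc k j = qq • (Tc k j * Tc i j) := by
  have := Vmk_rel (VRel.r4 i k j h1)
  simpa [Tc, map_mul, map_smul] using this

lemma tprod_head {ν μ d : ℕ} (ii : Fin (d+1) → Fin (ν+1)) (jj : Fin (d+1) → Fin (μ+1)) :
    tprod ii jj = Tc (ii 0) (jj 0) * tprod (Fin.tail ii) (Fin.tail jj) := by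
  simp [tprod, List.ofFn_succ, Fin.tail]

lemma s0t_zero {ν d : ℕ} (ii : Fin (d+1) → Fin (ν+1)) : s0t ii 0 = (ii 0).rev :=
  Function.update_self _ _ _

lemma s0t_tail {ν d : ℕ} (ii : Fin (d+1) → Fin (ν+1)) : Fin.tail (s0t ii) = Fin.tail ii :=
  funext fun a => Function.update_of_ne (Fin.succ_ne_zero a) ((ii 0).rev) ii

lemma s0t_invol {ν d : ℕ} (ii : Fin (d+1) → Fin (ν+1)) : s0t (s0t ii) = ii := by
  simp [s0t, Function.update_idem, Function.update_self]

lemma swt_invol {ν d : ℕ} (b : Fin d) (ii : Fin (d+1) → Fin (ν+1)) : swt b (swt b ii) = ii := by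
  funext a
  simp [swt, Function.comp, Equiv.swap_apply_self]

lemma swt_castSucc {ν d : ℕ} (b : Fin d) (ii : Fin (d+1) → Fin (ν+1)) :
    swt b ii b.castSucc = ii b.succ := by
  simp [swt, Equiv.swap_apply_left]

lemma swt_succ {ν d : ℕ} (b : Fin d) (ii : Fin (d+1) → Fin (ν+1)) :
    swt b ii b.succ = ii b.castSucc := by
  simp [swt, Equiv.swap_apply_right]

lemma swt_apply_zero {ν d : ℕ} (b : Fin d) (ii : Fin (d+2) → Fin (ν+1)) :
    swt b.succ ii 0 = ii 0 := by
  have h1 : (0 : Fin (d+2)) ≠ (b.succ).castSucc := by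
    rw [← Fin.succ_castSucc]; exact (Fin.succ_ne_zero _).symm
  have h2 : (0 : Fin (d+2)) ≠ (b.succ).succ := (Fin.succ_ne_zero _).symm
  rw [← Fin.succ_castSucc] at h1
  simp [swt, Equiv.swap_apply_of_ne_of_ne h1 h2]

lemma swt_tail {ν d : ℕ} (b : Fin d) (ii : Fin (d+2) → Fin (ν+1)) :
    Fin.tail (swt b.succ ii) = swt b (Fin.tail ii) := by
  funext a
  show ii (Equiv.swap (b.succ).castSucc (b.succ).succ a.succ)
    = ii (Equiv.swap b.castSucc b.succ a).succ
  rw [← Fin.succ_castSucc]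
  rw [Fin.succ_injective _ |>.swap_apply]

lemma swt_eq_self {ν d : ℕ} (b : Fin d) (ii : Fin (d+1) → Fin (ν+1))
    (h : ii b.castSucc = ii b.succ) : swt b ii = ii := by
  funext a
  rcases eq_or_ne a b.castSucc with rfl | h1
  · rw [swt_castSucc, h]
  rcases eq_or_ne a b.succ with rfl | h2
  · rw [swt_succ, h]
  · show ii (Equiv.swap _ _ a) = ii a
    rw [Equiv.swap_apply_of_ne_of_ne h1 h2]

-- part 2

/-- coefficient of the "moved" basis vector -/
def cA {N : ℕ} (x y : Fin N) : KK := if x = y then 0 else 1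
/-- coefficient of the "fixed" basis vector -/
def cB {N : ℕ} (x y : Fin N) : KK := if x < y then 0 else if x = y then qq⁻¹ else qq⁻¹ - qq

lemma cA_comm {N : ℕ} (x y : Fin N) : cA x y = cA y x := by
  simp [cA, eq_comm]

lemma hMatS_entry (ν : ℕ) {d : ℕ} (b : Fin d) (ii jj : Fin (d+1) → Fin (ν+1)) :
    hMatS ν b ii jj = (if jj = swt b ii then cA (ii b.castSucc) (ii b.succ) else 0)
      + (if jj = ii then cB (ii b.castSucc) (ii b.succ) else 0) := by
  rcases lt_trichotomy (ii b.castSucc) (ii b.succ) with h | h | h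
  · simp [hMatS, cA, cB, h, h.ne]
  · simp [hMatS, cA, cB, h, swt_eq_self b ii h]
  · simp [hMatS, cA, cB, h, h.ne', not_lt.2 h.le]

def cZA (ν : ℕ) (i : Fin (ν+1)) : KK := if 2*(i:ℕ) = ν then 0 else 1
def cZB (ν : ℕ) (i : Fin (ν+1)) : KK :=
  if ν < 2*(i:ℕ) then 0 else if 2*(i:ℕ) = ν then qq⁻¹ else qq⁻¹ - qq

lemma cZA_rev (ν : ℕ) (i : Fin (ν+1)) : cZA ν i.rev = cZA ν i := by
  have h : (2 * ((i.rev : ℕ)) = ν) ↔ (2 * ((i : ℕ)) = ν) := by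
    rw [Fin.val_rev]; omega
  simp only [cZA]
  exact if_congr h rfl rfl

lemma hMat0_entry (ν : ℕ) {d : ℕ} (ii jj : Fin (d+1) → Fin (ν+1)) :
    hMat0 ν d ii jj = (if jj = s0t ii then cZA ν (ii 0) else 0)
      + (if jj = ii then cZB ν (ii 0) else 0) := by
  rcases lt_trichotomy (2*((ii 0 : ℕ))) ν with h | h | h
  · simp [hMat0, cZA, cZB, h, h.ne, not_lt.2 h.le]
  · have hrev : (ii 0).rev = ii 0 := by
      apply Fin.ext; rw [Fin.val_rev]; omega
    have hs : s0t ii = ii := by rw [s0t, hrev, Function.update_eq_self]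
    simp [hMat0, cZA, cZB, h, hs, lt_irrefl]
  · simp [hMat0, cZA, cZB, h, h.ne', not_lt.2 h.le]

lemma row_collapse {I : Type*} [Fintype I] [DecidableEq I] {V : Type*} [AddCommMonoid V]
    [Module KK V] (x y : I) (c e : KK) (f : I → V) :
    (∑ j, ((if j = x then c else 0) + (if j = y then e else 0)) • f j) = c • f x + e • f y := by
  simp only [add_smul, Finset.sum_add_distrib, ite_smul, zero_smul]
  rw [Finset.sum_ite_eq', Finset.sum_ite_eq']
  simp

lemma col_collapse {I : Type*} [Fintype I] [DecidableEq I] {V : Type*} [AddCommMonoid V]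
    [Module KK V] (σ : I → I) (hσ : ∀ t, σ (σ t) = t) (c e : I → KK) (f : I → V) (x : I) :
    (∑ i, ((if x = σ i then c i else 0) + (if x = i then e i else 0)) • f i)
      = c (σ x) • f (σ x) + e x • f x := by
  have h1 : ∀ i, (x = σ i) = (i = σ x) :=
    fun i => propext ⟨fun h => by rw [h, hσ], fun h => by rw [h, hσ]⟩
  have h2 : ∀ i : I, (x = i) = (i = x) := fun i => propext eq_comm
  simp only [h1, h2, add_smul, Finset.sum_add_distrib, ite_smul, zero_smul]
  rw [Finset.sum_ite_eq', Finset.sum_ite_eq']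
  simp

-- part 3

lemma qq_ne_zero : qq ≠ 0 := RatFunc.X_ne_zero

lemma twoLetter {ν μ : ℕ} (i1 i2 : Fin (ν+1)) (k1 k2 : Fin (μ+1)) :
    cA k1 k2 • (Tc (ν := ν) i1 k2 * Tc i2 k1) + cB k1 k2 • (Tc i1 k1 * Tc i2 k2)
    = cA i1 i2 • (Tc i2 k1 * Tc i1 k2) + cB i1 i2 • (Tc i1 k1 * Tc i2 k2) := by
  rcases lt_trichotomy i1 i2 with hi | hi | hi
  · rcases lt_trichotomy k1 k2 with hk | hk | hk
    · simp only [cA, cB, if_pos hk, if_pos hi, if_neg hk.ne, if_neg hi.ne, one_smul,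
        zero_smul, add_zero]
      exact Tc_r2 hi hk
    · subst hk
      simp only [cA, cB, if_pos rfl, if_neg hi.ne, if_pos hi, lt_irrefl, if_neg, if_false,
        ite_true, one_smul, zero_smul, add_zero, zero_add]
      rw [Tc_r4 hi, smul_smul, inv_mul_cancel₀ qq_ne_zero, one_smul]
    · simp only [cA, cB, if_neg hk.ne', if_neg (not_lt.2 hk.le), if_pos hi, if_neg hi.ne,
        one_smul, zero_smul, add_zero]
      rw [Tc_r1 hi hk, add_assoc, ← add_smul]
      have : (qq - qq⁻¹) + (qq⁻¹ - qq) = 0 := by ring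
      rw [this, zero_smul, add_zero]
  · subst hi
    rcases lt_trichotomy k1 k2 with hk | hk | hk
    · simp only [cA, cB, if_pos hk, if_neg hk.ne, if_pos rfl, lt_irrefl, if_false, ite_true,
        one_smul, zero_smul, add_zero, zero_add]
      rw [Tc_r3 hk, smul_smul, inv_mul_cancel₀ qq_ne_zero, one_smul]
    · subst hk; simp [cA, cB]
    · simp only [cA, cB, if_neg hk.ne', if_neg (not_lt.2 hk.le), if_pos rfl, lt_irrefl,
        if_false, ite_true, one_smul, zero_smul, zero_add]
      rw [Tc_r3 hk, ← add_smul]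
      congr 1
      ring
  · rcases lt_trichotomy k1 k2 with hk | hk | hk
    · simp only [cA, cB, if_pos hk, if_neg hk.ne, if_neg hi.ne', if_neg (not_lt.2 hi.le),
        one_smul, zero_smul, add_zero]
      rw [Tc_r1 hi hk, Tc_r2 hi hk, add_assoc, ← add_smul]
      have : (qq - qq⁻¹) + (qq⁻¹ - qq) = 0 := by ring
      rw [this, zero_smul, add_zero]
    · subst hk
      simp only [cA, cB, if_pos rfl, lt_irrefl, if_false, ite_true, if_neg hi.ne',
        if_neg (not_lt.2 hi.le), one_smul, zero_smul, zero_add]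
      rw [Tc_r4 hi, ← add_smul]
      congr 1
      ring
    · simp only [cA, cB, if_neg hk.ne', if_neg (not_lt.2 hk.le), if_neg hi.ne',
        if_neg (not_lt.2 hi.le), one_smul]
      rw [Tc_r2 hi hk]

-- part 4

lemma twoLetterR {ν μ : ℕ} (i1 i2 : Fin (ν+1)) (k1 k2 : Fin (μ+1)) (R : Vc ν μ) :
    cA k1 k2 • (Tc (ν := ν) i1 k2 * (Tc i2 k1 * R)) + cB k1 k2 • (Tc i1 k1 * (Tc i2 k2 * R))
    = cA i1 i2 • (Tc i2 k1 * (Tc i1 k2 * R)) + cB i1 i2 • (Tc i1 k1 * (Tc i2 k2 * R)) := by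
  have h := congrArg (· * R) (twoLetter i1 i2 k1 k2)
  simpa [add_mul, smul_mul_assoc, mul_assoc] using h

lemma tprod_head2 {ν μ d : ℕ} (X : Fin (d+2) → Fin (ν+1)) (Y : Fin (d+2) → Fin (μ+1)) :
    tprod X Y = Tc (X 0) (Y 0) *
      (Tc (X 1) (Y 1) * tprod (Fin.tail (Fin.tail X)) (Fin.tail (Fin.tail Y))) := by
  rw [tprod_head, tprod_head]
  simp only [Fin.tail, Fin.succ_zero_eq_one]

lemma heckeS_core (ν μ : ℕ) : ∀ (d : ℕ) (b : Fin d) (ii : Fin (d+1) → Fin (ν+1))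
    (kk : Fin (d+1) → Fin (μ+1)),
    cA (kk b.castSucc) (kk b.succ) • tprod ii (swt b kk)
      + cB (kk b.castSucc) (kk b.succ) • tprod ii kk
    = cA (ii b.castSucc) (ii b.succ) • tprod (swt b ii) kk
      + cB (ii b.castSucc) (ii b.succ) • tprod ii kk := by
  intro d
  induction d with
  | zero => exact fun b => b.elim0
  | succ d' IH =>
    intro b
    induction b using Fin.cases with
    | zero =>
      intro ii kk
      have s1 : swt (0 : Fin (d'+1)) kk 0 = kk 1 := by simpa using swt_castSucc 0 kk
      have s2 : swt (0 : Fin (d'+1)) kk 1 = kk 0 := by simpa using swt_succ 0 kk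
      have s3 : swt (0 : Fin (d'+1)) ii 0 = ii 1 := by simpa using swt_castSucc 0 ii
      have s4 : swt (0 : Fin (d'+1)) ii 1 = ii 0 := by simpa using swt_succ 0 ii
      have t1 : Fin.tail (Fin.tail (swt (0 : Fin (d'+1)) kk)) = Fin.tail (Fin.tail kk) := by
        funext a
        show kk (Equiv.swap (Fin.castSucc 0) (Fin.succ 0) a.succ.succ) = kk a.succ.succ
        rw [Equiv.swap_apply_of_ne_of_ne]
        · apply Fin.ne_of_val_ne; simp
        · apply Fin.ne_of_val_ne; simp [Fin.ext_iff]
      have t2 : Fin.tail (Fin.tail (swt (0 : Fin (d'+1)) ii)) = Fin.tail (Fin.tail ii) := by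
        funext a
        show ii (Equiv.swap (Fin.castSucc 0) (Fin.succ 0) a.succ.succ) = ii a.succ.succ
        rw [Equiv.swap_apply_of_ne_of_ne]
        · apply Fin.ne_of_val_ne; simp
        · apply Fin.ne_of_val_ne; simp [Fin.ext_iff]
      rw [tprod_head2 ii (swt 0 kk), tprod_head2 ii kk, tprod_head2 (swt 0 ii) kk,
        s1, s2, s3, s4, t1, t2]
      simp only [Fin.castSucc_zero, Fin.succ_zero_eq_one]
      exact twoLetterR (ii 0) (ii 1) (kk 0) (kk 1) _
    | succ b' =>
      intro ii kk
      have e1 : tprod ii (swt b'.succ kk)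
          = Tc (ii 0) (kk 0) * tprod (Fin.tail ii) (swt b' (Fin.tail kk)) := by
        rw [tprod_head, swt_apply_zero, swt_tail]
      have e2 : tprod ii kk = Tc (ii 0) (kk 0) * tprod (Fin.tail ii) (Fin.tail kk) :=
        tprod_head ii kk
      have e3 : tprod (swt b'.succ ii) kk
          = Tc (ii 0) (kk 0) * tprod (swt b' (Fin.tail ii)) (Fin.tail kk) := by
        rw [tprod_head, swt_apply_zero, swt_tail]
      rw [e1, e2, e3, ← mul_smul_comm, ← mul_smul_comm, ← mul_smul_comm, ← mul_smul_comm,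
        ← mul_add, ← mul_add]
      exact congrArg _ (IH b' (Fin.tail ii) (Fin.tail kk))

-- part 5

lemma gen_mem {ν μ : ℕ} {x : Vc ν μ} (hx : x ∈ iIdealGens ν μ) : x ∈ Isub ν μ :=
  Submodule.subset_span ⟨x, hx, 1, (mul_one x).symm⟩

lemma letter_mem {ν μ : ℕ} (i : Fin (ν+1)) (k : Fin (μ+1)) :
    (cZA μ k • Tc i k.rev + cZB μ k • Tc i k
      - cZA ν i • Tc i.rev k - cZB ν i • Tc (ν := ν) i k) ∈ Isub ν μ := by
  have hi1 : (i : ℕ) ≤ ν := by omega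
  have hk1 : (k : ℕ) ≤ μ := by omega
  have hirev : ((i.rev : ℕ)) = ν - (i : ℕ) := by rw [Fin.val_rev]; omega
  have hkrev : ((k.rev : ℕ)) = μ - (k : ℕ) := by rw [Fin.val_rev]; omega
  rcases lt_trichotomy (2*(i : ℕ)) ν with hi | hi | hi <;>
    rcases lt_trichotomy (2*(k : ℕ)) μ with hk | hk | hk
  -- 2i<ν, 2k<μ  (case 9)
  · rw [show cZA μ k = 1 by rw [cZA, if_neg (by omega)],
      show cZB μ k = qq⁻¹ - qq by rw [cZB, if_neg (by omega), if_neg (by omega)],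
      show cZA ν i = 1 by rw [cZA, if_neg (by omega)],
      show cZB ν i = qq⁻¹ - qq by rw [cZB, if_neg (by omega), if_neg (by omega)]]
    have hg := gen_mem (ν := ν) (μ := μ)
      (Or.inr (Or.inl ⟨i.rev, k.rev, by omega, by omega, rfl⟩))
    rw [Fin.rev_rev, Fin.rev_rev] at hg
    have hL : (1 : KK) • Tc (ν := ν) i k.rev + (qq⁻¹ - qq) • Tc i k
        - (1 : KK) • Tc i.rev k - (qq⁻¹ - qq) • Tc i k
        = -(Tc i.rev k - Tc i k.rev) := by
      rw [one_smul, one_smul]; abel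
    rw [hL]; exact neg_mem hg
  -- 2i<ν, 2k=μ  (case 8)
  · have hk' : k = ⟨μ/2, by omega⟩ := Fin.ext (by simp; omega)
    rw [show cZA μ k = 0 by rw [cZA, if_pos (by omega)],
      show cZB μ k = qq⁻¹ by rw [cZB, if_neg (by omega), if_pos (by omega)],
      show cZA ν i = 1 by rw [cZA, if_neg (by omega)],
      show cZB ν i = qq⁻¹ - qq by rw [cZB, if_neg (by omega), if_neg (by omega)]]
    have hg := gen_mem (ν := ν) (μ := μ)
      (Or.inr (Or.inr (Or.inl ⟨i.rev, by omega, ⟨(k : ℕ), by omega⟩, rfl⟩)))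
    rw [Fin.rev_rev] at hg
    rw [← hk'] at hg
    have hL : (0 : KK) • Tc (ν := ν) i k.rev + qq⁻¹ • Tc i k
        - (1 : KK) • Tc i.rev k - (qq⁻¹ - qq) • Tc i k
        = -(Tc i.rev k - qq • Tc i k) := by
      rw [zero_smul, one_smul, sub_smul qq⁻¹ qq (Tc (ν := ν) i k), neg_sub]; abel
    rw [hL]; exact neg_mem hg
  -- 2i<ν, μ<2k  (case 7)
  · rw [show cZA μ k = 1 by rw [cZA, if_neg (by omega)],
      show cZB μ k = 0 by rw [cZB, if_pos (by omega)],
      show cZA ν i = 1 by rw [cZA, if_neg (by omega)],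
      show cZB ν i = qq⁻¹ - qq by rw [cZB, if_neg (by omega), if_neg (by omega)]]
    have h1 := gen_mem (ν := ν) (μ := μ)
      (Or.inl ⟨i.rev, k, by omega, hk, rfl⟩)
    have h2 := gen_mem (ν := ν) (μ := μ)
      (Or.inr (Or.inl ⟨i.rev, k, by omega, hk, rfl⟩))
    rw [Fin.rev_rev] at h1 h2
    have hL : (1 : KK) • Tc (ν := ν) i k.rev + (0 : KK) • Tc i k
        - (1 : KK) • Tc i.rev k - (qq⁻¹ - qq) • Tc i k
        = -(Tc i.rev k - Tc i k.rev + (qq⁻¹ - qq) • Tc i.rev k.rev)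
          + (qq⁻¹ - qq) • (Tc i.rev k.rev - Tc i k) := by
      rw [one_smul, zero_smul, one_smul, smul_sub]; abel
    rw [hL]; exact add_mem (neg_mem h1) (Submodule.smul_mem _ _ h2)
  -- 2i=ν, 2k<μ  (case 6)
  · have hi' : i = ⟨ν/2, by omega⟩ := Fin.ext (by simp; omega)
    rw [show cZA μ k = 1 by rw [cZA, if_neg (by omega)],
      show cZB μ k = qq⁻¹ - qq by rw [cZB, if_neg (by omega), if_neg (by omega)],
      show cZA ν i = 0 by rw [cZA, if_pos (by omega)],
      show cZB ν i = qq⁻¹ by rw [cZB, if_neg (by omega), if_pos (by omega)]]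
    have hg := gen_mem (ν := ν) (μ := μ)
      (Or.inr (Or.inr (Or.inr ⟨k.rev, by omega, ⟨(i : ℕ), by omega⟩, rfl⟩)))
    rw [Fin.rev_rev] at hg
    rw [← hi'] at hg
    have hL : (1 : KK) • Tc (ν := ν) i k.rev + (qq⁻¹ - qq) • Tc i k
        - (0 : KK) • Tc i.rev k - qq⁻¹ • Tc i k
        = Tc i k.rev - qq • Tc i k := by
      rw [one_smul, zero_smul, sub_smul qq⁻¹ qq (Tc (ν := ν) i k)]; abel
    rw [hL]; exact hg
  -- 2i=ν, 2k=μ  (case 5)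
  · rw [show cZA μ k = 0 by rw [cZA, if_pos (by omega)],
      show cZA ν i = 0 by rw [cZA, if_pos (by omega)],
      show cZB μ k = qq⁻¹ by rw [cZB, if_neg (by omega), if_pos (by omega)],
      show cZB ν i = qq⁻¹ by rw [cZB, if_neg (by omega), if_pos (by omega)]]
    simp
  -- 2i=ν, μ<2k  (case 4)
  · have hi' : i = ⟨ν/2, by omega⟩ := Fin.ext (by simp; omega)
    rw [show cZA μ k = 1 by rw [cZA, if_neg (by omega)],
      show cZB μ k = 0 by rw [cZB, if_pos (by omega)],
      show cZA ν i = 0 by rw [cZA, if_pos (by omega)],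
      show cZB ν i = qq⁻¹ by rw [cZB, if_neg (by omega), if_pos (by omega)]]
    have hg := gen_mem (ν := ν) (μ := μ)
      (Or.inr (Or.inr (Or.inr ⟨k, by omega, ⟨(i : ℕ), by omega⟩, rfl⟩)))
    rw [← hi'] at hg
    have hL : (1 : KK) • Tc (ν := ν) i k.rev + (0 : KK) • Tc i k
        - (0 : KK) • Tc i.rev k - qq⁻¹ • Tc i k
        = (-qq⁻¹) • (Tc i k - qq • Tc i k.rev) := by
      rw [one_smul, zero_smul, zero_smul, smul_sub, smul_smul, neg_mul,
        inv_mul_cancel₀ qq_ne_zero, neg_smul, neg_smul, one_smul, sub_neg_eq_add]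
      abel
    rw [hL]; exact Submodule.smul_mem _ _ hg
  -- ν<2i, 2k<μ  (case 3)
  · rw [show cZA μ k = 1 by rw [cZA, if_neg (by omega)],
      show cZB μ k = qq⁻¹ - qq by rw [cZB, if_neg (by omega), if_neg (by omega)],
      show cZA ν i = 1 by rw [cZA, if_neg (by omega)],
      show cZB ν i = 0 by rw [cZB, if_pos (by omega)]]
    have hg := gen_mem (ν := ν) (μ := μ)
      (Or.inl ⟨i, k.rev, hi, by omega, rfl⟩)
    rw [Fin.rev_rev] at hg
    have hL : (1 : KK) • Tc (ν := ν) i k.rev + (qq⁻¹ - qq) • Tc i k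
        - (1 : KK) • Tc i.rev k - (0 : KK) • Tc i k
        = Tc i k.rev - Tc i.rev k + (qq⁻¹ - qq) • Tc i k := by
      rw [one_smul, one_smul, zero_smul]; abel
    rw [hL]; exact hg
  -- ν<2i, 2k=μ  (case 2)
  · have hk' : k = ⟨μ/2, by omega⟩ := Fin.ext (by simp; omega)
    rw [show cZA μ k = 0 by rw [cZA, if_pos (by omega)],
      show cZB μ k = qq⁻¹ by rw [cZB, if_neg (by omega), if_pos (by omega)],
      show cZA ν i = 1 by rw [cZA, if_neg (by omega)],
      show cZB ν i = 0 by rw [cZB, if_pos (by omega)]]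
    have hg := gen_mem (ν := ν) (μ := μ)
      (Or.inr (Or.inr (Or.inl ⟨i, hi, ⟨(k : ℕ), by omega⟩, rfl⟩)))
    rw [← hk'] at hg
    have hL : (0 : KK) • Tc (ν := ν) i k.rev + qq⁻¹ • Tc i k
        - (1 : KK) • Tc i.rev k - (0 : KK) • Tc i k
        = qq⁻¹ • (Tc i k - qq • Tc i.rev k) := by
      rw [zero_smul, one_smul, zero_smul, smul_sub, smul_smul,
        inv_mul_cancel₀ qq_ne_zero, one_smul]
      abel
    rw [hL]; exact Submodule.smul_mem _ _ hg
  -- ν<2i, μ<2k  (case 1)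
  · rw [show cZA μ k = 1 by rw [cZA, if_neg (by omega)],
      show cZB μ k = 0 by rw [cZB, if_pos (by omega)],
      show cZA ν i = 1 by rw [cZA, if_neg (by omega)],
      show cZB ν i = 0 by rw [cZB, if_pos (by omega)]]
    have hg := gen_mem (ν := ν) (μ := μ)
      (Or.inr (Or.inl ⟨i, k, hi, hk, rfl⟩))
    have hL : (1 : KK) • Tc (ν := ν) i k.rev + (0 : KK) • Tc i k
        - (1 : KK) • Tc i.rev k - (0 : KK) • Tc i k
        = Tc i k.rev - Tc i.rev k := by
      rw [one_smul, one_smul, zero_smul]; abel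
    rw [hL]; exact hg

-- part 6

lemma heckeS_sum {ν μ d : ℕ} (b : Fin d) (ii : Fin (d+1) → Fin (ν+1))
    (kk : Fin (d+1) → Fin (μ+1)) :
    ∑ jj, hMatS μ b kk jj • itprod (ν := ν) ii jj
      = ∑ ii', hMatS ν b ii' ii • itprod ii' kk := by
  have hL : (∑ jj, hMatS μ b kk jj • itprod (ν := ν) ii jj)
      = cA (kk b.castSucc) (kk b.succ) • itprod ii (swt b kk)
        + cB (kk b.castSucc) (kk b.succ) • itprod ii kk := by
    simp_rw [hMatS_entry μ b kk]
    exact row_collapse _ _ _ _ _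
  have hR : (∑ ii', hMatS ν b ii' ii • itprod (μ := μ) ii' kk)
      = cA (ii b.castSucc) (ii b.succ) • itprod (swt b ii) kk
        + cB (ii b.castSucc) (ii b.succ) • itprod ii kk := by
    simp_rw [fun ii' => hMatS_entry ν b ii' ii]
    rw [col_collapse (swt b) (swt_invol b) (fun t => cA (t b.castSucc) (t b.succ))
      (fun t => cB (t b.castSucc) (t b.succ)) (fun t => itprod t kk) ii]
    rw [swt_castSucc, swt_succ, cA_comm]
  rw [hL, hR]
  show cA (kk b.castSucc) (kk b.succ) • Vimk ν μ (tprod ii (swt b kk))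
      + cB (kk b.castSucc) (kk b.succ) • Vimk ν μ (tprod ii kk)
    = cA (ii b.castSucc) (ii b.succ) • Vimk ν μ (tprod (swt b ii) kk)
      + cB (ii b.castSucc) (ii b.succ) • Vimk ν μ (tprod ii kk)
  rw [← map_smul, ← map_smul, ← map_smul, ← map_smul, ← map_add, ← map_add]
  exact congrArg _ (heckeS_core ν μ d b ii kk)

lemma hecke0_sum {ν μ d : ℕ} (ii : Fin (d+1) → Fin (ν+1)) (kk : Fin (d+1) → Fin (μ+1)) :
    ∑ jj, hMat0 μ d kk jj • itprod (ν := ν) ii jj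
      = ∑ ii', hMat0 ν d ii' ii • itprod ii' kk := by
  have hL : (∑ jj, hMat0 μ d kk jj • itprod (ν := ν) ii jj)
      = cZA μ (kk 0) • itprod ii (s0t kk) + cZB μ (kk 0) • itprod ii kk := by
    simp_rw [hMat0_entry μ kk]
    exact row_collapse _ _ _ _ _
  have hR : (∑ ii', hMat0 ν d ii' ii • itprod (μ := μ) ii' kk)
      = cZA ν (ii 0) • itprod (s0t ii) kk + cZB ν (ii 0) • itprod ii kk := by
    simp_rw [fun ii' => hMat0_entry ν ii' ii]
    rw [col_collapse s0t s0t_invol (fun t => cZA ν (t 0)) (fun t => cZB ν (t 0))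
      (fun t => itprod t kk) ii]
    rw [s0t_zero, cZA_rev]
  rw [hL, hR]
  show cZA μ (kk 0) • Vimk ν μ (tprod ii (s0t kk)) + cZB μ (kk 0) • Vimk ν μ (tprod ii kk)
    = cZA ν (ii 0) • Vimk ν μ (tprod (s0t ii) kk) + cZB ν (ii 0) • Vimk ν μ (tprod ii kk)
  rw [← map_smul, ← map_smul, ← map_smul, ← map_smul, ← map_add, ← map_add]
  simp only [Vimk, Submodule.mkQ_apply]
  rw [Submodule.Quotient.eq]
  have e1 : tprod ii (s0t kk)
      = Tc (ii 0) ((kk 0).rev) * tprod (Fin.tail ii) (Fin.tail kk) := by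
    rw [tprod_head, s0t_zero, s0t_tail]
  have e2 : tprod (s0t ii) kk
      = Tc ((ii 0).rev) (kk 0) * tprod (Fin.tail ii) (Fin.tail kk) := by
    rw [tprod_head, s0t_zero, s0t_tail]
  have e3 := tprod_head ii kk
  rw [e1, e2, e3]
  have hfac : cZA μ (kk 0) • (Tc (ii 0) (kk 0).rev * tprod (Fin.tail ii) (Fin.tail kk))
        + cZB μ (kk 0) • (Tc (ii 0) (kk 0) * tprod (Fin.tail ii) (Fin.tail kk))
      - (cZA ν (ii 0) • (Tc (ii 0).rev (kk 0) * tprod (Fin.tail ii) (Fin.tail kk))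
        + cZB ν (ii 0) • (Tc (ii 0) (kk 0) * tprod (Fin.tail ii) (Fin.tail kk)))
      = (cZA μ (kk 0) • Tc (ii 0) (kk 0).rev + cZB μ (kk 0) • Tc (ii 0) (kk 0)
         - cZA ν (ii 0) • Tc (ii 0).rev (kk 0) - cZB ν (ii 0) • Tc (ii 0) (kk 0))
        * tprod (Fin.tail ii) (Fin.tail kk) := by
    simp only [sub_mul, add_mul, smul_mul_assoc]
    abel
  rw [hfac]
  exact Isub_mul_mem (letter_mem (ii 0) (kk 0)) _

-- part 7

lemma rho_mat {ν μ dm : ℕ} (α : Module.Dual KK ↥(Vid ν μ (dm + 1)))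
    (Mμ : Matrix (Fin (dm+1) → Fin (μ+1)) (Fin (dm+1) → Fin (μ+1)) KK)
    (Mν : Matrix (Fin (dm+1) → Fin (ν+1)) (Fin (dm+1) → Fin (ν+1)) KK)
    (h : ∀ (ii : Fin (dm+1) → Fin (ν+1)) (kk : Fin (dm+1) → Fin (μ+1)),
      ∑ jj, Mμ kk jj • itprod (ν := ν) ii jj = ∑ ii', Mν ii' ii • itprod ii' kk)
    (v : (Fin (dm+1) → Fin (μ+1)) → KK) :
    rhoFun α (Mμ.vecMulLinear v) = Mν.vecMulLinear (rhoFun α v) := by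
  set A : Matrix (Fin (dm+1) → Fin (ν+1)) (Fin (dm+1) → Fin (μ+1)) KK :=
    Matrix.of fun ii jj => α (itprodD ii jj) with hA
  have hrho : rhoFun α = A.mulVecLin := rfl
  have hAM : A * Mμ.transpose = Mν.transpose * A := by
    ext ii kk
    simp only [Matrix.mul_apply, Matrix.transpose_apply, hA, Matrix.of_apply]
    have hD : (∑ jj, Mμ kk jj • itprodD (ν := ν) ii jj)
        = ∑ ii', Mν ii' ii • itprodD ii' kk := by
      apply Subtype.ext
      have hv1 : ((∑ jj, Mμ kk jj • itprodD (ν := ν) ii jj : ↥(Vid ν μ (dm+1))) : Viq ν μ)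
          = ∑ jj, Mμ kk jj • itprod (ν := ν) ii jj := by
        simp [itprodD]
      have hv2 : ((∑ ii', Mν ii' ii • itprodD (μ := μ) ii' kk : ↥(Vid ν μ (dm+1))) : Viq ν μ)
          = ∑ ii', Mν ii' ii • itprod (μ := μ) ii' kk := by
        simp [itprodD]
      rw [hv1, hv2]
      exact h ii kk
    calc ∑ jj, α (itprodD (ν := ν) ii jj) * Mμ kk jj
        = α (∑ jj, Mμ kk jj • itprodD (ν := ν) ii jj) := by
          rw [map_sum]
          exact Finset.sum_congr rfl fun jj _ => by rw [map_smul, smul_eq_mul, mul_comm]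
      _ = α (∑ ii', Mν ii' ii • itprodD (μ := μ) ii' kk) := by rw [hD]
      _ = ∑ ii', Mν ii' ii * α (itprodD (μ := μ) ii' kk) := by
          rw [map_sum]
          exact Finset.sum_congr rfl fun ii' _ => by rw [map_smul, smul_eq_mul]
  calc rhoFun α (Mμ.vecMulLinear v)
      = A.mulVec (Mμ.transpose.mulVec v) := by
        rw [hrho, Matrix.mulVecLin_apply, Matrix.vecMulLinear_apply, Matrix.mulVec_transpose]
    _ = (A * Mμ.transpose).mulVec v := Matrix.mulVec_mulVec v A Mμ.transpose
    _ = (Mν.transpose * A).mulVec v := by rw [hAM]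
    _ = Mν.transpose.mulVec (A.mulVec v) := (Matrix.mulVec_mulVec v Mν.transpose A).symm
    _ = Mν.vecMulLinear (rhoFun α v) := by
        rw [Matrix.mulVec_transpose, hrho, Matrix.mulVecLin_apply, Matrix.vecMulLinear_apply]

theorem rho_commutes_with_hecke' (ν μ dm : ℕ)
    (α : Module.Dual KK ↥(Vid ν μ (dm + 1)))
    (v : (Fin (dm + 1) → Fin (μ + 1)) → KK) :
    rhoFun α ((hMat0 μ dm).vecMulLinear v) = (hMat0 ν dm).vecMulLinear (rhoFun α v) ∧
    (∀ b : Fin dm,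
      rhoFun α ((hMatS μ b).vecMulLinear v) = (hMatS ν b).vecMulLinear (rhoFun α v)) :=
  ⟨rho_mat α _ _ (fun ii kk => hecke0_sum ii kk) v,
   fun b => rho_mat α _ _ (fun ii kk => heckeS_sum b ii kk) v⟩


/-- Lemma 2.10, second part. Every map in the image of `ρ_{n,m,d}`
commutes with the right Hecke-operator actions: `ρ(α)(v_jj T_a) = (ρ(α) v_jj) T_a` for all
`0 ≤ a ≤ d−1` (`d = dm + 1`), the operators `T_a` being realized by the explicit matrices
`hMat0`, `hMatS` acting on row vectors (`v ↦ v ᵥ* M`). -/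
theorem rho_commutes_with_hecke (ν μ dm : ℕ)
    (α : Module.Dual KK ↥(Vid ν μ (dm + 1)))
    (v : (Fin (dm + 1) → Fin (μ + 1)) → KK) :
    rhoFun α ((hMat0 μ dm).vecMulLinear v) = (hMat0 ν dm).vecMulLinear (rhoFun α v) ∧
    (∀ b : Fin dm,
      rhoFun α ((hMatS μ b).vecMulLinear v) = (hMatS ν b).vecMulLinear (rhoFun α v)) :=
  ⟨rho_mat α _ _ (fun ii kk => hecke0_sum ii kk) v,
   fun b => rho_mat α _ _ (fun ii kk => heckeS_sum b ii kk) v⟩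

end IQG
end
end
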